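/- arXiv:2209.11882 — 6 statements merged into one kernel-verified Lean document; each statement's English description precedes it below -/
import Mathlib

section
/- For all binary words u and v, the LCS multiplicity satisfies m_LCS(u,v) ≤ m_SCS(u,v). -/
/-- Length of a longest common subsequence of two binary words. -/
noncomputable def LCSlen (u v : List Bool) : ℕ :=
  sSup {m : ℕ | ∃ w : List Bool, w.Sublist u ∧ w.Sublist v ∧ w.length = m}

/-- Length of a shortest common supersequence of two binary words. -/
noncomputable def SCSlen (u v : List Bool) : ℕ :=
  sInf {m : ℕ | ∃ w : List Bool, u.Sublist w ∧ v.Sublist w ∧ w.length = m}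

/-- Deletion distance between two words of equal length `n`: `n - LCS`. -/
noncomputable def delDist (u v : List Bool) : ℕ := u.length - LCSlen u v

/-- Number of distinct longest common subsequences. -/
noncomputable def mLCS (u v : List Bool) : ℕ :=
  Set.ncard {w : List Bool | w.Sublist u ∧ w.Sublist v ∧ w.length = LCSlen u v}

/-- Number of distinct shortest common supersequences. -/
noncomputable def mSCS (u v : List Bool) : ℕ :=
  Set.ncard {w : List Bool | u.Sublist w ∧ v.Sublist w ∧ w.length = SCSlen u v}

/-!
Both multiplicities satisfy a recursion on the first letters. Equal first letters can be stripped
without changing either count. For first letters `a ≠ b`, every longest common subsequence of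
`a :: u` and `b :: v` is a common subsequence of the same length `L` of `(a :: u, v)` or of
`(u, b :: v)`, while the shortest common supersequences are exactly `a` or `b` prepended to a
common supersequence of length `S - 1` of `(u, b :: v)` resp. `(a :: u, v)`. Since
`LCS + SCS = |u| + |v|` for every pair, each slice of length `L` on the subsequence side is either
empty or the set of longest common subsequences of its pair, and then the matching slice of length
`S - 1` is the set of shortest common supersequences of that pair; induction concludes.
-/

section CommonLists

variable {α : Type*}

def commonSublistsOfLength (u v : List α) (n : ℕ) : Set (List α) :=
  {w | w.Sublist u ∧ w.Sublist v ∧ w.length = n}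

def commonSuperlistsOfLength (u v : List α) (n : ℕ) : Set (List α) :=
  {s | u.Sublist s ∧ v.Sublist s ∧ s.length = n}

lemma commonSublistsOfLength_comm (u v : List α) (n : ℕ) :
    commonSublistsOfLength u v n = commonSublistsOfLength v u n := by
  ext w
  exact and_left_comm

lemma commonSuperlistsOfLength_comm (u v : List α) (n : ℕ) :
    commonSuperlistsOfLength u v n = commonSuperlistsOfLength v u n := by
  ext s
  exact and_left_comm

lemma commonSuperlistsOfLength_finite [Finite α] (u v : List α) (n : ℕ) :
    (commonSuperlistsOfLength u v n).Finite :=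
  (List.finite_length_eq α n).subset fun _ hs => hs.2.2

lemma commonSublistsOfLength_nil_left (v : List α) :
    commonSublistsOfLength [] v 0 = {[]} := by
  ext w
  simp only [commonSublistsOfLength, Set.mem_ofPred_eq, Set.mem_singleton_iff,
    List.sublist_nil, List.length_eq_zero_iff]
  constructor
  · exact fun h => h.1
  · rintro rfl
    exact ⟨rfl, List.nil_sublist v, rfl⟩

lemma commonSuperlistsOfLength_nil_left (v : List α) :
    commonSuperlistsOfLength [] v v.length = {v} := by
  ext s
  simp only [commonSuperlistsOfLength, Set.mem_ofPred_eq, Set.mem_singleton_iff]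
  constructor
  · rintro ⟨-, hv, hs⟩
    exact (hv.eq_of_length hs.symm).symm
  · rintro rfl
    exact ⟨List.nil_sublist s, List.Sublist.refl s, rfl⟩

lemma commonSublistsOfLength_cons_cons (a : α) (u v : List α) (n : ℕ) :
    commonSublistsOfLength (a :: u) (a :: v) (n + 1) =
      commonSublistsOfLength u v (n + 1) ∪ List.cons a '' commonSublistsOfLength u v n := by
  ext w
  constructor
  · rintro ⟨hu, hv, hw⟩
    obtain _ | ⟨d, r⟩ := w
    · simp at hw
    by_cases hd : d = a
    · subst hd
      exact Or.inr ⟨r, ⟨List.cons_sublist_cons.mp hu, List.cons_sublist_cons.mp hv,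
        Nat.succ_injective hw⟩, rfl⟩
    · exact Or.inl ⟨hu.of_cons_of_ne hd, hv.of_cons_of_ne hd, hw⟩
  · rintro (⟨hu, hv, hw⟩ | ⟨r, ⟨hu, hv, hr⟩, rfl⟩)
    · exact ⟨hu.cons a, hv.cons a, hw⟩
    · exact ⟨hu.cons_cons a, hv.cons_cons a, by rw [List.length_cons, hr]⟩

lemma commonSublistsOfLength_cons_cons_of_ne {a b : α} (hab : a ≠ b) (u v : List α) (n : ℕ) :
    commonSublistsOfLength (a :: u) (b :: v) n =
      commonSublistsOfLength (a :: u) v n ∪ commonSublistsOfLength u (b :: v) n := by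
  ext w
  constructor
  · rintro ⟨hu, hv, hw⟩
    obtain _ | ⟨d, r⟩ := w
    · exact Or.inl ⟨hu, List.nil_sublist v, hw⟩
    by_cases hd : d = b
    · subst hd
      exact Or.inr ⟨hu.of_cons_of_ne hab.symm, hv, hw⟩
    · exact Or.inl ⟨hu, hv.of_cons_of_ne hd, hw⟩
  · rintro (⟨hu, hv, hw⟩ | ⟨hu, hv, hw⟩)
    · exact ⟨hu, hv.cons b, hw⟩
    · exact ⟨hu.cons a, hv, hw⟩

end CommonLists

section BoolSuperlists

lemma commonSuperlistsOfLength_cons_cons (a : Bool) (u v : List Bool) (n : ℕ) :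
    commonSuperlistsOfLength (a :: u) (a :: v) (n + 1) =
      List.cons a '' commonSuperlistsOfLength u v n ∪
        List.cons (!a) '' commonSuperlistsOfLength (a :: u) (a :: v) n := by
  ext s
  constructor
  · rintro ⟨hu, hv, hs⟩
    obtain _ | ⟨d, s⟩ := s
    · simp at hs
    by_cases hd : d = a
    · subst hd
      exact Or.inl ⟨s, ⟨List.cons_sublist_cons.mp hu, List.cons_sublist_cons.mp hv,
        Nat.succ_injective hs⟩, rfl⟩
    · obtain rfl := Bool.eq_not_of_ne hd
      exact Or.inr ⟨s, ⟨hu.of_cons_of_ne (Ne.symm hd), hv.of_cons_of_ne (Ne.symm hd),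
        Nat.succ_injective hs⟩, rfl⟩
  · rintro (⟨s, ⟨hu, hv, hs⟩, rfl⟩ | ⟨s, ⟨hu, hv, hs⟩, rfl⟩)
    · exact ⟨hu.cons_cons a, hv.cons_cons a, by rw [List.length_cons, hs]⟩
    · exact ⟨hu.cons _, hv.cons _, by rw [List.length_cons, hs]⟩

lemma commonSuperlistsOfLength_cons_cons_of_ne {a b : Bool} (hab : a ≠ b) (u v : List Bool)
    (n : ℕ) :
    commonSuperlistsOfLength (a :: u) (b :: v) (n + 1) =
      List.cons a '' commonSuperlistsOfLength u (b :: v) n ∪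
        List.cons b '' commonSuperlistsOfLength (a :: u) v n := by
  ext s
  constructor
  · rintro ⟨hu, hv, hs⟩
    obtain _ | ⟨d, s⟩ := s
    · simp at hs
    obtain rfl | rfl : d = a ∨ d = b := by revert hab; cases d <;> cases a <;> cases b <;> decide
    · exact Or.inl ⟨s, ⟨List.cons_sublist_cons.mp hu, hv.of_cons_of_ne hab.symm,
        Nat.succ_injective hs⟩, rfl⟩
    · exact Or.inr ⟨s, ⟨hu.of_cons_of_ne hab, List.cons_sublist_cons.mp hv,
        Nat.succ_injective hs⟩, rfl⟩
  · rintro (⟨s, ⟨hu, hv, hs⟩, rfl⟩ | ⟨s, ⟨hu, hv, hs⟩, rfl⟩)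
    · exact ⟨hu.cons_cons a, hv.cons a, by rw [List.length_cons, hs]⟩
    · exact ⟨hu.cons b, hv.cons_cons b, by rw [List.length_cons, hs]⟩

end BoolSuperlists

section Lengths

variable {u v : List Bool}

lemma mLCS_eq_ncard (u v : List Bool) :
    mLCS u v = (commonSublistsOfLength u v (LCSlen u v)).ncard := rfl

lemma mSCS_eq_ncard (u v : List Bool) :
    mSCS u v = (commonSuperlistsOfLength u v (SCSlen u v)).ncard := rfl

lemma LCSlen_eq_sSup (u v : List Bool) :
    LCSlen u v = sSup {n | (commonSublistsOfLength u v n).Nonempty} := rfl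

lemma SCSlen_eq_sInf (u v : List Bool) :
    SCSlen u v = sInf {n | (commonSuperlistsOfLength u v n).Nonempty} := rfl

lemma LCSlen_comm (u v : List Bool) : LCSlen u v = LCSlen v u := by
  simp only [LCSlen_eq_sSup, commonSublistsOfLength_comm u v]

lemma SCSlen_comm (u v : List Bool) : SCSlen u v = SCSlen v u := by
  simp only [SCSlen_eq_sInf, commonSuperlistsOfLength_comm u v]

lemma bddAbove_LCSlen_set (u v : List Bool) :
    BddAbove {n | (commonSublistsOfLength u v n).Nonempty} :=
  ⟨u.length, fun _ ⟨_, hu, _, hw⟩ => hw ▸ hu.length_le⟩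

lemma le_LCSlen_of_mem {w : List Bool} {n : ℕ} (hw : w ∈ commonSublistsOfLength u v n) :
    n ≤ LCSlen u v :=
  le_csSup (bddAbove_LCSlen_set u v) (Set.nonempty_of_mem hw)

lemma SCSlen_le_of_mem {s : List Bool} {n : ℕ} (hs : s ∈ commonSuperlistsOfLength u v n) :
    SCSlen u v ≤ n :=
  Nat.sInf_le (Set.nonempty_of_mem hs)

lemma nonempty_commonSublistsOfLength_LCSlen (u v : List Bool) :
    (commonSublistsOfLength u v (LCSlen u v)).Nonempty :=
  Nat.sSup_mem (s := {n | (commonSublistsOfLength u v n).Nonempty})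
    ⟨0, [], List.nil_sublist u, List.nil_sublist v, rfl⟩ (bddAbove_LCSlen_set u v)

lemma nonempty_commonSuperlistsOfLength_SCSlen (u v : List Bool) :
    (commonSuperlistsOfLength u v (SCSlen u v)).Nonempty :=
  Nat.sInf_mem (s := {n | (commonSuperlistsOfLength u v n).Nonempty})
    ⟨_, u ++ v, u.sublist_append_left v, u.sublist_append_right v, rfl⟩

lemma commonSublistsOfLength_eq_empty {n : ℕ} (hn : LCSlen u v < n) :
    commonSublistsOfLength u v n = ∅ :=
  Set.eq_empty_of_forall_notMem fun _ hw => (le_LCSlen_of_mem hw).not_gt hn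

lemma commonSuperlistsOfLength_eq_empty {n : ℕ} (hn : n < SCSlen u v) :
    commonSuperlistsOfLength u v n = ∅ :=
  Set.eq_empty_of_forall_notMem fun _ hs => (SCSlen_le_of_mem hs).not_gt hn

lemma LCSlen_mono {u' v' : List Bool} (hu : u'.Sublist u) (hv : v'.Sublist v) :
    LCSlen u' v' ≤ LCSlen u v :=
  let ⟨_, hu', hv', hw⟩ := nonempty_commonSublistsOfLength_LCSlen u' v'
  le_LCSlen_of_mem ⟨hu'.trans hu, hv'.trans hv, hw⟩

lemma LCSlen_le_length_left (u v : List Bool) : LCSlen u v ≤ u.length :=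
  csSup_le' fun _ ⟨_, hu, _, hw⟩ => hw ▸ hu.length_le

lemma length_right_le_SCSlen (u v : List Bool) : v.length ≤ SCSlen u v :=
  let ⟨_, _, hv, hs⟩ := nonempty_commonSuperlistsOfLength_SCSlen u v
  hs ▸ hv.length_le

lemma LCSlen_nil_left (v : List Bool) : LCSlen [] v = 0 :=
  Nat.le_zero.mp (LCSlen_le_length_left [] v)

lemma SCSlen_nil_left (v : List Bool) : SCSlen [] v = v.length :=
  le_antisymm (SCSlen_le_of_mem ⟨List.nil_sublist v, List.Sublist.refl v, rfl⟩)
    (length_right_le_SCSlen [] v)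

end Lengths

section Recursion

lemma LCSlen_cons_cons (a : Bool) (u v : List Bool) :
    LCSlen (a :: u) (a :: v) = LCSlen u v + 1 := by
  obtain ⟨w, hw⟩ := nonempty_commonSublistsOfLength_LCSlen u v
  have hge : LCSlen u v + 1 ≤ LCSlen (a :: u) (a :: v) := le_LCSlen_of_mem (w := a :: w) <| by
    rw [commonSublistsOfLength_cons_cons]
    exact Or.inr ⟨w, hw, rfl⟩
  obtain ⟨n, hn⟩ := Nat.exists_eq_add_one.mpr (Nat.lt_of_lt_of_le (Nat.succ_pos _) hge)
  obtain ⟨w', hw'⟩ := nonempty_commonSublistsOfLength_LCSlen (a :: u) (a :: v)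
  rw [hn, commonSublistsOfLength_cons_cons] at hw'
  have hle : n ≤ LCSlen u v := by
    rcases hw' with h | ⟨r, h, -⟩
    · exact n.le_succ.trans (le_LCSlen_of_mem h)
    · exact le_LCSlen_of_mem h
  omega

lemma SCSlen_cons_cons (a : Bool) (u v : List Bool) :
    SCSlen (a :: u) (a :: v) = SCSlen u v + 1 := by
  obtain ⟨s, hs⟩ := nonempty_commonSuperlistsOfLength_SCSlen u v
  have hle : SCSlen (a :: u) (a :: v) ≤ SCSlen u v + 1 := SCSlen_le_of_mem (s := a :: s) <| by
    rw [commonSuperlistsOfLength_cons_cons]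
    exact Or.inl ⟨s, hs, rfl⟩
  obtain ⟨n, hn⟩ := Nat.exists_eq_add_one.mpr
    (Nat.lt_of_lt_of_le (Nat.succ_pos _) (length_right_le_SCSlen (a :: u) (a :: v)))
  obtain ⟨s', hs'⟩ := nonempty_commonSuperlistsOfLength_SCSlen (a :: u) (a :: v)
  rw [hn, commonSuperlistsOfLength_cons_cons] at hs'
  rcases hs' with ⟨r, h, -⟩ | ⟨r, h, -⟩
  · have := SCSlen_le_of_mem h
    omega
  · have := SCSlen_le_of_mem h
    omega

lemma LCSlen_cons_cons_of_ne {a b : Bool} (hab : a ≠ b) (u v : List Bool) :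
    LCSlen (a :: u) (b :: v) = max (LCSlen (a :: u) v) (LCSlen u (b :: v)) := by
  refine le_antisymm ?_ (max_le (LCSlen_mono (.refl _) (v.sublist_cons_self b))
    (LCSlen_mono (u.sublist_cons_self a) (.refl _)))
  obtain ⟨w, hw⟩ := nonempty_commonSublistsOfLength_LCSlen (a :: u) (b :: v)
  rw [commonSublistsOfLength_cons_cons_of_ne hab] at hw
  rcases hw with h | h
  · exact le_max_of_le_left (le_LCSlen_of_mem h)
  · exact le_max_of_le_right (le_LCSlen_of_mem h)

lemma SCSlen_cons_cons_of_ne {a b : Bool} (hab : a ≠ b) (u v : List Bool) :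
    SCSlen (a :: u) (b :: v) = min (SCSlen (a :: u) v) (SCSlen u (b :: v)) + 1 := by
  obtain ⟨s₁, hs₁⟩ := nonempty_commonSuperlistsOfLength_SCSlen (a :: u) v
  obtain ⟨s₂, hs₂⟩ := nonempty_commonSuperlistsOfLength_SCSlen u (b :: v)
  have hle₁ : SCSlen (a :: u) (b :: v) ≤ SCSlen (a :: u) v + 1 :=
    SCSlen_le_of_mem (s := b :: s₁) <| by
      rw [commonSuperlistsOfLength_cons_cons_of_ne hab]
      exact Or.inr ⟨s₁, hs₁, rfl⟩
  have hle₂ : SCSlen (a :: u) (b :: v) ≤ SCSlen u (b :: v) + 1 :=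
    SCSlen_le_of_mem (s := a :: s₂) <| by
      rw [commonSuperlistsOfLength_cons_cons_of_ne hab]
      exact Or.inl ⟨s₂, hs₂, rfl⟩
  obtain ⟨n, hn⟩ := Nat.exists_eq_add_one.mpr
    (Nat.lt_of_lt_of_le (Nat.succ_pos _) (length_right_le_SCSlen (a :: u) (b :: v)))
  obtain ⟨s, hs⟩ := nonempty_commonSuperlistsOfLength_SCSlen (a :: u) (b :: v)
  rw [hn, commonSuperlistsOfLength_cons_cons_of_ne hab] at hs
  rcases hs with ⟨r, h, -⟩ | ⟨r, h, -⟩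
  · have := SCSlen_le_of_mem h
    omega
  · have := SCSlen_le_of_mem h
    omega

theorem LCSlen_add_SCSlen (u v : List Bool) :
    LCSlen u v + SCSlen u v = u.length + v.length := by
  induction u generalizing v with
  | nil => rw [LCSlen_nil_left, SCSlen_nil_left, List.length_nil]
  | cons a u ihu =>
    induction v with
    | nil =>
      rw [LCSlen_comm, SCSlen_comm, LCSlen_nil_left, SCSlen_nil_left, List.length_nil,
        Nat.zero_add, Nat.add_zero]
    | cons b v ihv =>
      obtain rfl | hab := eq_or_ne a b
      · have := ihu v
        simp only [LCSlen_cons_cons, SCSlen_cons_cons, List.length_cons]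
        omega
      · have := ihu (b :: v)
        simp only [LCSlen_cons_cons_of_ne hab, SCSlen_cons_cons_of_ne hab, List.length_cons]
          at ihv this ⊢
        omega

end Recursion

section Multiplicities

lemma mLCS_comm (u v : List Bool) : mLCS u v = mLCS v u := by
  rw [mLCS_eq_ncard, mLCS_eq_ncard, LCSlen_comm, commonSublistsOfLength_comm]

lemma mSCS_comm (u v : List Bool) : mSCS u v = mSCS v u := by
  rw [mSCS_eq_ncard, mSCS_eq_ncard, SCSlen_comm, commonSuperlistsOfLength_comm]

lemma mLCS_nil_left (v : List Bool) : mLCS [] v = 1 := by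
  rw [mLCS_eq_ncard, LCSlen_nil_left, commonSublistsOfLength_nil_left, Set.ncard_singleton]

lemma mSCS_nil_left (v : List Bool) : mSCS [] v = 1 := by
  rw [mSCS_eq_ncard, SCSlen_nil_left, commonSuperlistsOfLength_nil_left, Set.ncard_singleton]

lemma mLCS_cons_cons (a : Bool) (u v : List Bool) : mLCS (a :: u) (a :: v) = mLCS u v := by
  rw [mLCS_eq_ncard, mLCS_eq_ncard, LCSlen_cons_cons, commonSublistsOfLength_cons_cons,
    commonSublistsOfLength_eq_empty (Nat.lt_succ_self _), Set.empty_union,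
    Set.ncard_image_of_injective _ List.cons_injective]

lemma mSCS_cons_cons (a : Bool) (u v : List Bool) : mSCS (a :: u) (a :: v) = mSCS u v := by
  have hlt : SCSlen u v < SCSlen (a :: u) (a :: v) := by
    rw [SCSlen_cons_cons]
    exact Nat.lt_succ_self _
  rw [mSCS_eq_ncard, mSCS_eq_ncard, SCSlen_cons_cons, commonSuperlistsOfLength_cons_cons,
    commonSuperlistsOfLength_eq_empty hlt, Set.image_empty, Set.union_empty,
    Set.ncard_image_of_injective _ List.cons_injective]

/-- By `LCSlen_add_SCSlen`, the slice of length `n` is nonempty only at `n = LCSlen u v`, which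
forces `m = SCSlen u v`. -/
lemma ncard_commonSublistsOfLength_le {u v : List Bool} (h : mLCS u v ≤ mSCS u v) {n m : ℕ}
    (hn : LCSlen u v ≤ n) (hnm : n + m = u.length + v.length) :
    (commonSublistsOfLength u v n).ncard ≤ (commonSuperlistsOfLength u v m).ncard := by
  obtain hlt | rfl := hn.lt_or_eq
  · rw [commonSublistsOfLength_eq_empty hlt, Set.ncard_empty]
    exact Nat.zero_le _
  · obtain rfl : m = SCSlen u v := by
      have := LCSlen_add_SCSlen u v
      omega
    exact h

lemma mLCS_le_mSCS_cons_cons_of_ne {a b : Bool} (hab : a ≠ b) {u v : List Bool}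
    (h₁ : mLCS (a :: u) v ≤ mSCS (a :: u) v) (h₂ : mLCS u (b :: v) ≤ mSCS u (b :: v)) :
    mLCS (a :: u) (b :: v) ≤ mSCS (a :: u) (b :: v) := by
  set n := LCSlen (a :: u) (b :: v)
  obtain ⟨m, hm⟩ := Nat.exists_eq_add_one.mpr
    (Nat.lt_of_lt_of_le (Nat.succ_pos _) (length_right_le_SCSlen (a :: u) (b :: v)))
  have hnm : n + m = u.length + v.length + 1 := by
    have := LCSlen_add_SCSlen (a :: u) (b :: v)
    simp only [List.length_cons] at this
    omega
  have hdisj : Disjoint (List.cons a '' commonSuperlistsOfLength u (b :: v) m)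
      (List.cons b '' commonSuperlistsOfLength (a :: u) v m) :=
    Set.disjoint_left.mpr fun _ ⟨_, _, h⟩ ⟨_, _, h'⟩ =>
      hab (List.cons.inj (h.trans h'.symm)).1
  calc mLCS (a :: u) (b :: v)
      = (commonSublistsOfLength (a :: u) v n ∪ commonSublistsOfLength u (b :: v) n).ncard := by
        rw [mLCS_eq_ncard, commonSublistsOfLength_cons_cons_of_ne hab]
    _ ≤ (commonSublistsOfLength (a :: u) v n).ncard
          + (commonSublistsOfLength u (b :: v) n).ncard := Set.ncard_union_le _ _
    _ ≤ (commonSuperlistsOfLength (a :: u) v m).ncard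
          + (commonSuperlistsOfLength u (b :: v) m).ncard := by
        refine add_le_add ?_ ?_
        · exact ncard_commonSublistsOfLength_le h₁
            (LCSlen_mono (.refl _) (v.sublist_cons_self b)) (by rw [List.length_cons]; omega)
        · exact ncard_commonSublistsOfLength_le h₂
            (LCSlen_mono (u.sublist_cons_self a) (.refl _)) (by rw [List.length_cons]; omega)
    _ = mSCS (a :: u) (b :: v) := by
        rw [mSCS_eq_ncard, hm, commonSuperlistsOfLength_cons_cons_of_ne hab,
          Set.ncard_union_eq hdisj ((commonSuperlistsOfLength_finite _ _ _).image _)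
            ((commonSuperlistsOfLength_finite _ _ _).image _),
          Set.ncard_image_of_injective _ List.cons_injective,
          Set.ncard_image_of_injective _ List.cons_injective, Nat.add_comm]

end Multiplicities

theorem stmt1 (u v : List Bool) : mLCS u v ≤ mSCS u v := by
  induction u generalizing v with
  | nil => rw [mLCS_nil_left, mSCS_nil_left]
  | cons a u ihu =>
    induction v with
    | nil => rw [mLCS_comm, mSCS_comm, mLCS_nil_left, mSCS_nil_left]
    | cons b v ihv =>
      obtain rfl | hab := eq_or_ne a b
      · rw [mLCS_cons_cons, mSCS_cons_cons]
        exact ihu v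
      · exact mLCS_le_mSCS_cons_cons_of_ne hab ihv (ihu (b :: v))
end

section
/- Let n, k, λ ≥ 1 be integers, and let u, v ∈ {0,1}^n be words that are both λ-nonrepeating. Suppose v = f_{I,T}(u) for some sequence (I,T) of insertions and deletions applied to u. If the number of indices j such that the position i_j is λ-isolated in I is at least 2k + 1, then the deletion distance satisfies d(u,v) > k. -/
/-- Type of an elementary operation: delete, insert a 0, or insert a 1. -/
inductive OpType : Type
  | del : OpType
  | ins0 : OpType
  | ins1 : OpType
  deriving DecidableEq

/-- Apply the elementary operation `(i, t)` to the word `u`: delete the `i`-th letter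
(1-indexed) if `t = del`, or insert a `0` (resp. `1`) immediately after position `i`
(0-indexed insertion slot) if `t = ins0` (resp. `ins1`). -/
def applyOp (u : List Bool) (op : ℕ × OpType) : List Bool :=
  match op.2 with
  | OpType.del  => u.eraseIdx (op.1 - 1)
  | OpType.ins0 => u.insertIdx op.1 false
  | OpType.ins1 => u.insertIdx op.1 true

/-- Apply a sequence of operations, listed in order of application
(i.e. the list is `[(i_l, t_l), (i_{l-1}, t_{l-1}), ..., (i_1, t_1)]`). -/
def applyOps (u : List Bool) (ops : List (ℕ × OpType)) : List Bool :=
  ops.foldl applyOp u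

/-- Validity of a sequence of operations on a word of length `n`, listed in order of
application: all positions are at most `n`, a deletion position is at least `1`,
positions are nonincreasing, and the position strictly decreases after a deletion. -/
def ValidOps (n : ℕ) (ops : List (ℕ × OpType)) : Prop :=
  (∀ p ∈ ops, p.1 ≤ n ∧ (p.2 = OpType.del → 1 ≤ p.1)) ∧
  List.Chain' (fun p q => q.1 ≤ p.1 ∧ (p.2 = OpType.del → q.1 < p.1)) ops

/-- The position at index `j` in the list of positions `is` is `lam`-isolated (with
respect to a word of length `n`): `lam < i_j < n - lam` and every other position in
the list differs from `i_j` by more than `2 * lam`. -/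
def IsolatedAt (n lam : ℕ) (is : List ℕ) (j : Fin is.length) : Prop :=
  lam < is.get j ∧ is.get j + lam < n ∧
    ∀ j' : Fin is.length, j' ≠ j → 2 * lam < ((is.get j' : ℤ) - (is.get j : ℤ)).natAbs

/-- A word `u` is `lam`-nonrepeating if no two contiguous subintervals of length `lam`
starting at distinct positions are equal. -/
def NonRepeating (lam : ℕ) (u : List Bool) : Prop :=
  ∀ i j : ℕ, i + lam ≤ u.length → j + lam ≤ u.length → i ≠ j →
    (u.drop i).take lam ≠ (u.drop j).take lam


namespace OpType

def insertedLetters : OpType → List Bool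
  | del => []
  | ins0 => [false]
  | ins1 => [true]

def numErased : OpType → ℕ
  | del => 1
  | ins0 => 0
  | ins1 => 0

theorem numErased_le_one (t : OpType) : t.numErased ≤ 1 := by
  cases t <;> decide

theorem length_insertedLetters_ne_numErased (t : OpType) :
    t.insertedLetters.length ≠ t.numErased := by
  cases t <;> decide

end OpType

theorem List.insertIdx_eq_take_append_cons_drop {α : Type*} (l : List α) (a : α) {i : ℕ}
    (h : i ≤ l.length) : l.insertIdx i a = l.take i ++ a :: l.drop i := by
  induction l generalizing i with
  | nil => simp_all
  | cons x xs ih =>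
    cases i with
    | zero => simp
    | succ i => simp [ih (Nat.le_of_succ_le_succ h)]

section Operations

variable {w P Q : List Bool} {i m : ℕ} {t : OpType}

theorem applyOp_eq_take_append_drop (hi : i ≤ w.length) (ht : t = .del → 1 ≤ i) :
    applyOp w (i, t) = w.take (i - t.numErased) ++ t.insertedLetters ++ w.drop i := by
  cases t
  · have : i - 1 + 1 = i := by have := ht rfl; omega
    simp [applyOp, OpType.numErased, OpType.insertedLetters, List.eraseIdx_eq_take_drop_succ, this]
  all_goals simp [applyOp, OpType.numErased, OpType.insertedLetters,
    List.insertIdx_eq_take_append_cons_drop _ _ hi]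

theorem take_applyOp (h : m < i) : (applyOp w (i, t)).take m = w.take m := by
  cases t
  · exact List.take_eraseIdx_eq_take_of_le _ _ _ (by omega)
  all_goals exact List.take_insertIdx_eq_take_of_le _ _ _ _ h.le

theorem applyOp_append (hi : i ≤ P.length) (ht : t = .del → 1 ≤ i) :
    applyOp (P ++ Q) (i, t) = applyOp P (i, t) ++ Q := by
  rw [applyOp_eq_take_append_drop (by simp only [List.length_append]; omega) ht,
    applyOp_eq_take_append_drop hi ht,
    List.take_append_of_le_length (by omega), List.drop_append_of_le_length hi]
  simp

theorem sub_numErased_le_length_applyOp (hi : i ≤ w.length) (ht : t = .del → 1 ≤ i) :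
    i - t.numErased ≤ (applyOp w (i, t)).length := by
  rw [applyOp_eq_take_append_drop hi ht]
  simp only [List.length_append, List.length_take]
  omega

theorem applyOps_cons (ops : List (ℕ × OpType)) (p : ℕ × OpType) :
    applyOps w (p :: ops) = applyOps (applyOp w p) ops := rfl

theorem applyOps_append (A B : List (ℕ × OpType)) :
    applyOps w (A ++ B) = applyOps (applyOps w A) B :=
  List.foldl_append

theorem take_applyOps {ops : List (ℕ × OpType)} (h : ∀ p ∈ ops, m < p.1) :
    (applyOps w ops).take m = w.take m := by
  induction ops generalizing w with
  | nil => rfl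
  | cons p ops ih =>
    rw [applyOps_cons, ih fun q hq => h q (.tail _ hq), take_applyOp (h p (.head _))]

end Operations

namespace ValidOps

variable {n m : ℕ} {ops : List (ℕ × OpType)}

theorem pairwise (hops : ValidOps n ops) :
    ops.Pairwise fun p q => q.1 ≤ p.1 ∧ (p.2 = .del → q.1 < p.1) := by
  let R : ℕ × OpType → ℕ × OpType → Prop := fun p q => q.1 ≤ p.1 ∧ (p.2 = .del → q.1 < p.1)
  have : Trans R R R := ⟨fun hab hbc => ⟨hbc.1.trans hab.1, fun h => hbc.1.trans_lt (hab.2 h)⟩⟩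
  exact hops.2.pairwise

theorem mono (hops : ValidOps n ops) (h : n ≤ m) : ValidOps m ops :=
  ⟨fun p hp => ⟨(hops.1 p hp).1.trans h, (hops.1 p hp).2⟩, hops.2⟩

theorem of_cons {i : ℕ} {t : OpType} (hops : ValidOps n ((i, t) :: ops)) :
    ValidOps (i - t.numErased) ops := by
  refine ⟨fun p hp => ⟨?_, (hops.1 p (.tail _ hp)).2⟩, hops.2.tail⟩
  obtain ⟨hle, hlt⟩ := List.rel_of_pairwise_cons hops.pairwise hp
  cases t
  · exact Nat.le_sub_one_of_lt (hlt rfl)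
  all_goals exact hle

theorem applyOps_append {P Q : List Bool} (hops : ValidOps P.length ops) :
    applyOps (P ++ Q) ops = applyOps P ops ++ Q := by
  induction ops generalizing P with
  | nil => rfl
  | cons p ops ih =>
    obtain ⟨i, t⟩ := p
    obtain ⟨hi, ht⟩ := hops.1 _ (.head _)
    rw [applyOps_cons, applyOps_cons, applyOp_append hi ht]
    exact ih (hops.of_cons.mono (sub_numErased_le_length_applyOp hi ht))

end ValidOps

/-- The image under the operation `(i, t)` of the window `w[i-lam-1] … w[i+lam-1]` (0-indexed) of
`2 lam + 1` letters centred at `w[i-1]`, the letter deleted or followed by the inserted one. -/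
def localImage (w : List Bool) (lam i : ℕ) (t : OpType) : List Bool :=
  (w.take (i - t.numErased)).drop (i - lam - 1) ++ t.insertedLetters ++ (w.take (i + lam)).drop i

section LocalImage

variable {w : List Bool} {lam i c : ℕ} {t : OpType}

theorem applyOp_eq_take_append_localImage (hi : i ≤ w.length) (ht : t = .del → 1 ≤ i) :
    applyOp w (i, t) = w.take (i - lam - 1) ++ localImage w lam i t ++ w.drop (i + lam) := by
  have hleft : w.take (i - t.numErased) =
      w.take (i - lam - 1) ++ (w.take (i - t.numErased)).drop (i - lam - 1) := by
    conv_lhs => rw [← List.take_append_drop (i - lam - 1) (w.take (i - t.numErased))]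
    rw [List.take_take, min_eq_left (by have := t.numErased_le_one; omega)]
  have hright : w.drop i = (w.take (i + lam)).drop i ++ w.drop (i + lam) := by
    rw [List.drop_take, Nat.add_sub_cancel_left, ← List.drop_drop, List.take_append_drop]
  rw [applyOp_eq_take_append_drop hi ht, hleft, hright, localImage]
  simp only [List.append_assoc]

theorem localImage_take (h : i + lam ≤ c) :
    localImage (w.take c) lam i t = localImage w lam i t := by
  simp only [localImage, List.take_take]
  rw [min_eq_left (by omega), min_eq_left (by omega)]

end LocalImage

namespace NonRepeating

variable {lam : ℕ} {u : List Bool}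

theorem eq_of_take_drop_eq (hu : NonRepeating lam u) {p q : ℕ} (hp : p + lam ≤ u.length)
    (hq : q + lam ≤ u.length) (h : (u.drop p).take lam = (u.drop q).take lam) : p = q := by
  by_contra hne
  exact hu p q hp hq hne h

theorem add_length_eq_of_infix (hu : NonRepeating lam u) {a b : ℕ} {A M : List Bool}
    (ha : a + lam ≤ u.length) (hb : b + lam ≤ u.length) (hA : lam ≤ A.length)
    (hAu : A <+: u.drop a) (h : A ++ M ++ (u.drop b).take lam <:+: u) :
    a + A.length + M.length = b := by
  obtain ⟨s, r, hsr⟩ := h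
  have hB : ((u.drop b).take lam).length = lam := by
    simp only [List.length_take, List.length_drop]; omega
  have hlen : s.length + A.length + M.length + lam ≤ u.length := by
    rw [← hsr]; simp only [List.length_append, hB]; omega
  have hdrop : ∀ m, u.drop (s.length + m) = (A ++ M ++ (u.drop b).take lam ++ r).drop m := by
    intro m
    conv_lhs => rw [← hsr, List.append_assoc s, List.drop_append]
    simp
  have hs : s.length = a := by
    refine hu.eq_of_take_drop_eq (by omega) ha ?_
    rw [← add_zero s.length, hdrop, List.drop_zero, List.append_assoc, List.append_assoc,
      List.take_append_of_le_length hA, List.prefix_iff_eq_take.mp hAu, List.take_take,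
      min_eq_left hA]
  refine hs ▸ hu.eq_of_take_drop_eq (by omega) hb ?_
  rw [add_assoc, ← List.length_append, hdrop, List.append_assoc, List.drop_left,
    List.take_append_of_le_length hB.ge, List.take_of_length_le hB.le]

theorem not_infix_localImage (hu : NonRepeating lam u) {i : ℕ} {t : OpType} (hi : lam < i)
    (hin : i + lam ≤ u.length) : ¬ localImage u lam i t <:+: u := by
  intro h
  have key := hu.add_length_eq_of_infix (a := i - lam - 1)
    (A := (u.take (i - t.numErased)).drop (i - lam - 1)) (M := t.insertedLetters) (by omega) hin (by
      simp only [List.length_drop, List.length_take]; have := t.numErased_le_one; omega)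
    (by rw [List.drop_take]; exact List.take_prefix _ _)
    (by simpa [localImage, List.drop_take] using h)
  simp only [List.length_drop, List.length_take] at key
  have := t.numErased_le_one
  have := t.length_insertedLetters_ne_numErased
  omega

end NonRepeating

theorem localImage_isPrefix_applyOps {A B : List (ℕ × OpType)} {x : List Bool} {lam i : ℕ}
    {t : OpType} (hA : ∀ p ∈ A, i + lam < p.1) (hB : ValidOps (i - lam - 1) B)
    (ht : t = .del → 1 ≤ i) (hx : i + lam ≤ x.length) :
    applyOps (x.take (i - lam - 1)) B ++ localImage x lam i t <+:
      applyOps x (A ++ (i, t) :: B) := by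
  have hy : (applyOps x A).take (i + lam) = x.take (i + lam) := take_applyOps hA
  rw [applyOps_append, applyOps_cons]
  generalize applyOps x A = y at hy
  have hylen : i + lam ≤ y.length := by
    have := congrArg List.length hy
    simp only [List.length_take] at this
    omega
  have hyleft : y.take (i - lam - 1) = x.take (i - lam - 1) := by
    rw [← min_eq_left (show i - lam - 1 ≤ i + lam by omega), ← List.take_take, hy, List.take_take]
  have hyloc : localImage y lam i t = localImage x lam i t := by
    rw [← localImage_take le_rfl, hy, localImage_take le_rfl]
  rw [applyOp_eq_take_append_localImage (lam := lam) (by omega) ht, hyleft, hyloc,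
    List.append_assoc, (hB.mono (by simp only [List.length_take]; omega)).applyOps_append]
  exact ⟨_, List.append_assoc _ _ _⟩

namespace ValidOps

variable {n lam j : ℕ} {ops : List (ℕ × OpType)}

theorem far_of_isolated (hops : ValidOps n ops) (hj : j < ops.length)
    (hiso : ∀ p ∈ ops.eraseIdx j, 2 * lam < ((p.1 : ℤ) - ops[j].1).natAbs) :
    (∀ p ∈ ops.take j, ops[j].1 + 2 * lam < p.1) ∧
      ∀ p ∈ ops.drop (j + 1), p.1 + 2 * lam < ops[j].1 := by
  have hpw := hops.pairwise
  rw [← List.take_append_drop j ops, List.drop_eq_getElem_cons hj, List.pairwise_append,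
    List.pairwise_cons] at hpw
  rw [List.eraseIdx_eq_take_drop_succ] at hiso
  refine ⟨fun p hp => ?_, fun p hp => ?_⟩
  · have h₁ := (hpw.2.2 p hp ops[j] (.head _)).1
    have h₂ := hiso p (List.mem_append_left _ hp)
    omega
  · have h₁ := (hpw.2.1.1 p hp).1
    have h₂ := hiso p (List.mem_append_right _ hp)
    omega

theorem localImage_isPrefix_applyOps_drop (hops : ValidOps n ops) (hj : j < ops.length)
    (hiso : ∀ p ∈ ops.eraseIdx j, 2 * lam < ((p.1 : ℤ) - ops[j].1).natAbs) {d : ℕ} (hd : d ≤ j)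
    {x : List Bool} (hx : ops[j].1 + lam ≤ x.length) :
    applyOps (x.take (ops[j].1 - lam - 1)) (ops.drop (j + 1)) ++
      localImage x lam ops[j].1 ops[j].2 <+: applyOps x (ops.drop d) := by
  obtain ⟨hleft, hright⟩ := hops.far_of_isolated hj hiso
  have hsplit : ops.drop d = (ops.take j).drop d ++ ops[j] :: ops.drop (j + 1) := by
    conv_lhs => rw [← List.take_append_drop j ops]
    rw [List.drop_append_of_le_length (by simp only [List.length_take]; omega),
      List.drop_eq_getElem_cons hj]
  rw [hsplit]
  exact localImage_isPrefix_applyOps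
    (fun p hp => by have := hleft p (List.mem_of_mem_drop hp); omega)
    ⟨fun p hp => ⟨by have := hright p hp; omega, (hops.1 p (List.mem_of_mem_drop hp)).2⟩,
      hops.2.drop _⟩
    (hops.1 _ (List.getElem_mem hj)).2 hx

theorem localImage_isPrefix_of_lt (hops : ValidOps n ops) {j₁ j₂ : ℕ} (h : j₁ < j₂)
    (hj₂ : j₂ < ops.length)
    (hiso : ∀ p ∈ ops.eraseIdx j₂, 2 * lam < ((p.1 : ℤ) - ops[j₂].1).natAbs) {u : List Bool}
    (hin : ops[j₂].1 + lam ≤ u.length) :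
    applyOps (u.take (ops[j₂].1 - lam - 1)) (ops.drop (j₂ + 1)) ++
      localImage u lam ops[j₂].1 ops[j₂].2 <+:
      applyOps (u.take (ops[j₁].1 - lam - 1)) (ops.drop (j₁ + 1)) := by
  have hfar := (hops.far_of_isolated hj₂ hiso).1 ops[j₁]
    (List.mem_iff_getElem.mpr ⟨j₁, by simp only [List.length_take]; omega, List.getElem_take⟩)
  have := hops.localImage_isPrefix_applyOps_drop hj₂ hiso h
    (x := u.take (ops[j₁].1 - lam - 1)) (by simp only [List.length_take]; omega)
  rwa [List.take_take, min_eq_left (by omega), localImage_take (by omega)] at this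

end ValidOps

theorem StrictMono.apply_add_eq_of_forall_mem_range {g : ℕ → ℕ} (hg : StrictMono g) {r L : ℕ}
    (h : ∀ m < L, g r + m ∈ Set.range g) : ∀ m < L, g (r + m) = g r + m := by
  intro m
  induction m with
  | zero => simp
  | succ m ih =>
    intro hm
    obtain ⟨r', hr'⟩ := h (m + 1) hm
    have hm' := ih (by omega)
    have hlt : r + m < r' := hg.lt_iff_lt.mp (by omega)
    have h₁ := hg.monotone (show r + (m + 1) ≤ r' by omega)
    have h₂ := hg (show r + m < r + (m + 1) by omega)
    omega

theorem exists_sublist_sublist_length_eq_LCSlen (u v : List Bool) :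
    ∃ w : List Bool, w.Sublist u ∧ w.Sublist v ∧ w.length = LCSlen u v :=
  Nat.sSup_mem (s := {m | ∃ w : List Bool, w.Sublist u ∧ w.Sublist v ∧ w.length = m})
    ⟨0, [], List.nil_sublist _, List.nil_sublist _, rfl⟩
    ⟨u.length, by rintro _ ⟨w, hw, -, rfl⟩; exact hw.length_le⟩

section CommonSubsequence

variable {u v w : List Bool} {f g : ℕ ↪o ℕ}

theorem List.lt_length_iff_of_getElem?_eq {α : Type*} {l l' : List α} {r s : ℕ}
    (h : l[r]? = l'[s]?) : s < l'.length ↔ r < l.length := by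
  rw [← not_le, ← not_le, ← List.getElem?_eq_none_iff, ← List.getElem?_eq_none_iff, h]

theorem Iio_length_sdiff_range_eq (hf : ∀ r, w[r]? = u[f r]?) :
    Set.Iio u.length \ Set.range f = Set.Iio u.length \ f '' Set.Iio w.length := by
  ext p
  simp only [Set.mem_sdiff, Set.mem_Iio, Set.mem_range, Set.mem_image, and_congr_right_iff]
  intro hp
  exact not_congr ⟨fun ⟨r, hr⟩ => ⟨r, (List.lt_length_iff_of_getElem?_eq (hf r)).mp (hr ▸ hp), hr⟩,
    fun ⟨r, _, hr⟩ => ⟨r, hr⟩⟩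

theorem ncard_Iio_length_sdiff_range (hf : ∀ r, w[r]? = u[f r]?) :
    (Set.Iio u.length \ Set.range f).ncard = u.length - w.length := by
  have hsub : f '' Set.Iio w.length ⊆ Set.Iio u.length := by
    rintro _ ⟨r, hr, rfl⟩
    exact (List.lt_length_iff_of_getElem?_eq (hf r)).mpr hr
  rw [Iio_length_sdiff_range_eq hf, Set.ncard_sdiff hsub (Set.toFinite _),
    Set.ncard_image_of_injective _ f.injective, Set.ncard_Iio_nat, Set.ncard_Iio_nat]

/-- Positions left unmatched by a common subsequence embedded by `g` into `v` and by `f` into `u`;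
positions of `v` form the left summand, positions of `u` the right one. -/
def unmatchedPositions (u v : List Bool) (f g : ℕ ↪o ℕ) : Set (ℕ ⊕ ℕ) :=
  Sum.inl '' (Set.Iio v.length \ Set.range g) ∪ Sum.inr '' (Set.Iio u.length \ Set.range f)

/-- Where the window `[a, b)` of `v` forces an unmatched position: inside the window, or in `u`
between the images of two letters matched into the window. -/
def windowShadow (f g : ℕ ↪o ℕ) (a b : ℕ) : Set (ℕ ⊕ ℕ) :=
  Sum.inl '' Set.Ico a b ∪
    Sum.inr '' {p | ∃ r₀ r₁, a ≤ g r₀ ∧ g r₁ < b ∧ f r₀ ≤ p ∧ p ≤ f r₁}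

theorem ncard_unmatchedPositions_le (hf : ∀ r, w[r]? = u[f r]?) (hg : ∀ r, w[r]? = v[g r]?) :
    (unmatchedPositions u v f g).ncard ≤ (u.length - w.length) + (v.length - w.length) := by
  refine (Set.ncard_union_le _ _).trans ?_
  rw [Set.ncard_image_of_injective _ Sum.inl_injective,
    Set.ncard_image_of_injective _ Sum.inr_injective, ncard_Iio_length_sdiff_range hf,
    ncard_Iio_length_sdiff_range hg, add_comm]

theorem unmatchedPositions_finite : (unmatchedPositions u v f g).Finite :=
  (((Set.finite_Iio _).sdiff).image _).union (((Set.finite_Iio _).sdiff).image _)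

theorem disjoint_windowShadow {a₁ b₁ a₂ b₂ : ℕ} (h : b₁ ≤ a₂) :
    Disjoint (windowShadow f g a₁ b₁) (windowShadow f g a₂ b₂) := by
  rw [Set.disjoint_left]
  rintro _ (⟨q, hq, rfl⟩ | ⟨p, ⟨r₀, r₁, -, hr₁, -, hp₁⟩, rfl⟩)
    (⟨q', hq', hqq⟩ | ⟨p', ⟨r₀', r₁', hr₀', -, hp₀', -⟩, hpp⟩)
  · cases Sum.inl_injective hqq
    simp only [Set.mem_Ico] at hq hq'
    omega
  · cases hpp
  · cases hqq
  · cases Sum.inr_injective hpp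
    have : r₁ < r₀' := g.lt_iff_lt.mp (by omega)
    have := f.lt_iff_lt.mpr this
    omega

/-- If all of `F` is matched, its letters are matched with consecutive letters of `u`, making `F` a
factor of `u`, unless some letter of `u` in between is skipped. -/
theorem exists_mem_unmatchedPositions_windowShadow (hf : ∀ r, w[r]? = u[f r]?)
    (hg : ∀ r, w[r]? = v[g r]?) {X F : List Bool} (hXF : X ++ F <+: v) (hF : ¬ F <:+: u) :
    ∃ x ∈ unmatchedPositions u v f g, x ∈ windowShadow f g X.length (X.length + F.length) := by
  by_contra! hnone
  have hv : ∀ m (hm : m < F.length), v[X.length + m]? = some F[m] := fun m hm => by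
    obtain ⟨Y, rfl⟩ := hXF
    simp [List.getElem?_append_right, List.getElem?_append_left, hm]
  have hvmatched : ∀ m < F.length, X.length + m ∈ Set.range g := by
    intro m hm
    by_contra hnot
    have hlt : X.length + m < v.length := by
      have := hv m hm; rw [List.getElem?_eq_some_iff] at this; exact this.1
    exact hnone _ (.inl ⟨_, ⟨hlt, hnot⟩, rfl⟩) (.inl ⟨_, ⟨by omega, by omega⟩, rfl⟩)
  have hFpos : 0 < F.length := List.length_pos_iff.mpr fun h => hF (h ▸ List.nil_infix)
  obtain ⟨r₀, hr₀⟩ := hvmatched 0 hFpos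
  have hgr := g.strictMono.apply_add_eq_of_forall_mem_range (L := F.length) (r := r₀)
    (by rw [hr₀]; simpa using hvmatched)
  have hu : ∀ m (hm : m < F.length), u[f (r₀ + m)]? = some F[m] := fun m hm => by
    rw [← hf, hg, hgr m hm, hr₀, add_zero, hv m hm]
  have hulen : ∀ m < F.length, f (r₀ + m) < u.length := fun m hm => by
    have := hu m hm; rw [List.getElem?_eq_some_iff] at this; exact this.1
  have hfr := f.strictMono.apply_add_eq_of_forall_mem_range (L := F.length) (r := r₀) <| by
    intro m hm
    by_contra hnot
    have hle : f r₀ + m ≤ f (r₀ + m) := by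
      have := f.strictMono.add_le_nat m r₀; rw [add_comm r₀]; omega
    refine hnone _ (.inr ⟨_, ⟨by have := hulen m hm; simp only [Set.mem_Iio]; omega, hnot⟩, rfl⟩)
      (.inr ⟨_, ⟨r₀, r₀ + m, ?_, ?_, le_self_add, hle⟩, rfl⟩)
    · omega
    · have := hgr m hm; omega
  refine hF (List.infix_iff_getElem?.mpr ⟨f r₀, ?_, fun m hm => ?_⟩)
  · have := hulen (F.length - 1) (by omega)
    rw [hfr _ (by omega)] at this
    omega
  · rw [add_comm, ← hfr m hm, hu m hm]

theorem ncard_le_of_windows {ι : Type*} {S : Set ι} (hwu : w.Sublist u) (hwv : w.Sublist v)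
    (X F : ι → List Bool) (hF : ∀ j ∈ S, ¬ F j <:+: u) (hXF : ∀ j ∈ S, X j ++ F j <+: v)
    (hdisj : S.Pairwise fun j₁ j₂ => X j₁ ++ F j₁ <+: X j₂ ∨ X j₂ ++ F j₂ <+: X j₁) :
    S.ncard ≤ (u.length - w.length) + (v.length - w.length) := by
  obtain ⟨f, hf⟩ := List.sublist_iff_exists_orderEmbedding_getElem?_eq.mp hwu
  obtain ⟨g, hg⟩ := List.sublist_iff_exists_orderEmbedding_getElem?_eq.mp hwv
  choose! φ hφ hφS using fun j hj =>
    exists_mem_unmatchedPositions_windowShadow hf hg (hXF j hj) (hF j hj)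
  refine (Set.ncard_le_ncard_of_injOn φ hφ ?_ unmatchedPositions_finite).trans
    (ncard_unmatchedPositions_le hf hg)
  intro j₁ h₁ j₂ h₂ heq
  by_contra hne
  rcases hdisj h₁ h₂ hne with h | h
  · have hlen := h.length_le
    simp only [List.length_append] at hlen
    exact Set.disjoint_left.mp (disjoint_windowShadow hlen) (hφS j₁ h₁) (heq ▸ hφS j₂ h₂)
  · have hlen := h.length_le
    simp only [List.length_append] at hlen
    exact Set.disjoint_left.mp (disjoint_windowShadow hlen) (hφS j₂ h₂) (heq ▸ hφS j₁ h₁)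

end CommonSubsequence

theorem IsolatedAt.map_fst {n lam : ℕ} {ops : List (ℕ × OpType)}
    {j : Fin (ops.map Prod.fst).length} (h : IsolatedAt n lam (ops.map Prod.fst) j) :
    lam < ops[(j : ℕ)].1 ∧ ops[(j : ℕ)].1 + lam < n ∧
      ∀ p ∈ ops.eraseIdx j, 2 * lam < ((p.1 : ℤ) - ops[(j : ℕ)].1).natAbs := by
  obtain ⟨hlo, hhi, hfar⟩ := h
  simp only [List.get_eq_getElem, List.getElem_map] at hlo hhi hfar
  refine ⟨hlo, hhi, fun p hp => ?_⟩
  obtain ⟨j', hj', hne, rfl⟩ := List.mem_eraseIdx_iff_getElem.mp hp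
  exact hfar ⟨j', by simpa using hj'⟩ (Fin.ne_of_val_ne hne)

theorem stmt4_general (n k lam : ℕ) (u v : List Bool) (hu : u.length = n) (hv : v.length = n)
    (hur : NonRepeating lam u)
    (ops : List (ℕ × OpType)) (hops : ValidOps n ops) (hveq : v = applyOps u ops)
    (hiso : 2 * k + 1 ≤
      Set.ncard {j : Fin (ops.map Prod.fst).length |
        IsolatedAt n lam (ops.map Prod.fst) j}) :
    k < delDist u v := by
  obtain ⟨w, hwu, hwv, hw⟩ := exists_sublist_sublist_length_eq_LCSlen u v
  have hwindows := ncard_le_of_windows hwu hwv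
    (S := {j : Fin (ops.map Prod.fst).length | IsolatedAt n lam (ops.map Prod.fst) j})
    (fun j => applyOps (u.take (ops[(j : ℕ)].1 - lam - 1)) (ops.drop (j + 1)))
    (fun j => localImage u lam ops[(j : ℕ)].1 ops[(j : ℕ)].2) ?_ ?_ ?_
  · unfold delDist
    omega
  · intro j hj
    obtain ⟨hlo, hhi, -⟩ := hj.map_fst
    exact hur.not_infix_localImage hlo (by omega)
  · intro j hj
    obtain ⟨-, hhi, hfar⟩ := hj.map_fst
    simpa [hveq] using
      hops.localImage_isPrefix_applyOps_drop _ hfar (Nat.zero_le _) (x := u) (by omega)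
  · intro j₁ h₁ j₂ h₂ hne
    rcases Fin.lt_or_lt_of_ne hne with h | h
    · obtain ⟨-, hhi, hfar⟩ := h₂.map_fst
      exact .inr (hops.localImage_isPrefix_of_lt h _ hfar (by omega))
    · obtain ⟨-, hhi, hfar⟩ := h₁.map_fst
      exact .inl (hops.localImage_isPrefix_of_lt h _ hfar (by omega))

theorem stmt4 (n k lam : ℕ) (hn : 1 ≤ n) (hk : 1 ≤ k) (hlam1 : 1 ≤ lam)
    (hlamn : lam ≤ n) (u v : List Bool) (hu : u.length = n) (hv : v.length = n)
    (hur : NonRepeating lam u) (hvr : NonRepeating lam v)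
    (ops : List (ℕ × OpType)) (hops : ValidOps n ops) (hveq : v = applyOps u ops)
    (hiso : 2 * k + 1 ≤
      Set.ncard {j : Fin (ops.map Prod.fst).length |
        IsolatedAt n lam (ops.map Prod.fst) j}) :
    k < delDist u v :=
  stmt4_general n k lam u v hu hv hur ops hops hveq hiso
end

section
/- For every integer c ≥ 1, the words u = (10)^⟨4c−2⟩ and v = (0110)^⟨4c−2⟩ (both of length 4c − 2) satisfy d(u,v) = c and m_LCS(u,v) = binomial(2c, c). -/
/-- `repPrefix x m` is the prefix of length `m` of the infinite periodic word `xxx⋯`. -/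
def repPrefix (x : List Bool) (m : ℕ) : List Bool :=
  (List.flatten (List.replicate m x)).take m

/-!
Both words are prefixes of periodic words, so embeddability into them is decided by greedy
matching: `w <+ (10)^⟨n⟩ ↔ altCost true w ≤ n` and `w <+ (0110)^⟨n⟩ ↔ cost0110 0 w ≤ n`.
Each letter raises the potential `2 · altCost + cost0110` by at least 4, so a common subsequence
of the two words of length `n = 4c - 2` has at most `⌊3n / 4⌋ = 3c - 2` letters, and this is
attained. A longest one has potential at most `4 |w| + 2`; this slack of 2 forces it to be a
sequence of blocks `p` and `(¬p) p` of alternating phase `p`, possibly followed by one more letter.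
Counting the blocks against both costs leaves three families, of sizes `C(2c-1, c-1)`,
`C(2c-2, c)` and `C(2c-2, c-1)`, which add up to `C(2c, c)` by Pascal's rule.
-/

section GreedyEmbedding

variable {σ α : Type*} (out : σ → α) (step : σ → σ)

def cycleWord (s : σ) : ℕ → List α
  | 0 => []
  | m + 1 => out s :: cycleWord (step s) m

-- The recursion satisfied by the length of the shortest prefix of `cycleWord out step s`
-- containing `w`.
def IsGreedyCost [DecidableEq α] (f : σ → List α → ℕ) : Prop :=
  (∀ s, f s [] = 0) ∧ ∀ s x w,
    f s (x :: w) = if x = out s then f (step s) w + 1 else f (step s) (x :: w) + 1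

variable {out step}

theorem cycleWord_add (s : σ) (k m : ℕ) :
    cycleWord out step s (k + m) = cycleWord out step s k ++ cycleWord out step (step^[k] s) m := by
  induction k generalizing s with
  | zero => simp [cycleWord]
  | succ k ih => rw [Nat.add_right_comm, cycleWord, ih]; rfl

theorem length_cycleWord (s : σ) (m : ℕ) : (cycleWord out step s m).length = m := by
  induction m generalizing s with
  | zero => rfl
  | succ m ih => simp [cycleWord, ih]

theorem sublist_cycleWord_iff [DecidableEq α] {f : σ → List α → ℕ}
    (hf : IsGreedyCost out step f) (m : ℕ) (s : σ) (w : List α) :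
    w.Sublist (cycleWord out step s m) ↔ f s w ≤ m := by
  induction m generalizing s w with
  | zero =>
    cases w with
    | nil => simp [hf.1]
    | cons x w =>
      simp only [cycleWord, List.sublist_nil, reduceCtorEq, false_iff, hf.2 s x w]
      split_ifs <;> omega
  | succ m ih =>
    cases w with
    | nil => simp [hf.1]
    | cons x w =>
      rw [hf.2, cycleWord]
      split_ifs with hx
      · rw [hx, List.cons_sublist_cons, ih]; omega
      · rw [List.sublist_cons_iff, ih]
        simp [hx]

end GreedyEmbedding

theorem take_flatten_replicate {x : List Bool} {m k : ℕ} (hmk : m ≤ k) :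
    ((List.replicate k x).flatten).take m = repPrefix x m := by
  rcases Nat.eq_zero_or_pos x.length with hx | hx
  · simp [repPrefix, List.length_eq_zero_iff.mp hx]
  obtain ⟨j, rfl⟩ := Nat.exists_eq_add_of_le hmk
  have hm : m ≤ ((List.replicate m x).flatten).length := by
    simpa using Nat.le_mul_of_pos_right m hx
  rw [List.replicate_add, List.flatten_append, List.take_append_of_le_length hm, repPrefix]

theorem repPrefix_of_le_length {x : List Bool} {m : ℕ} (hm : m ≤ x.length) :
    repPrefix x m = x.take m := by
  cases m with
  | zero => simp [repPrefix]
  | succ m =>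
    rw [repPrefix, List.replicate_succ, List.flatten_cons, List.take_append_of_le_length hm]

theorem repPrefix_length_add (x : List Bool) (m : ℕ) :
    repPrefix x (x.length + m) = x ++ repPrefix x m := by
  cases x with
  | nil => simp [repPrefix]
  | cons a x =>
    rw [repPrefix, List.length_cons, Nat.add_right_comm, List.replicate_succ, List.flatten_cons,
      Nat.add_right_comm, ← List.length_cons, List.take_length_add_append,
      take_flatten_replicate (Nat.le_add_left _ _)]

theorem repPrefix_eq_cycleWord {σ : Type*} {out : σ → Bool} {step : σ → σ} {x : List Bool}
    {s : σ} (hpos : 0 < x.length) (hx : cycleWord out step s x.length = x)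
    (hs : step^[x.length] s = s) (m : ℕ) :
    repPrefix x m = cycleWord out step s m := by
  induction m using Nat.strong_induction_on with
  | _ m ih =>
    rcases le_or_gt m x.length with hm | hm
    · obtain ⟨j, hj⟩ := Nat.exists_eq_add_of_le hm
      rw [repPrefix_of_le_length hm, ← hx, hj, cycleWord_add,
        List.take_left' (length_cycleWord ..)]
    · obtain ⟨j, rfl⟩ := Nat.exists_eq_add_of_le hm.le
      rw [repPrefix_length_add, ih j (by omega), cycleWord_add, hs, hx]

def altCost : Bool → List Bool → ℕ
  | _, [] => 0
  | p, x :: w => if x = p then altCost (!p) w + 1 else altCost p w + 2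

def pat0110 : Fin 4 → Bool := ![false, true, true, false]

-- Every letter occurs within any three consecutive letters of `0110`.
def cost0110 : Fin 4 → List Bool → ℕ
  | _, [] => 0
  | i, x :: w =>
    if x = pat0110 i then cost0110 (i + 1) w + 1
    else if x = pat0110 (i + 1) then cost0110 (i + 2) w + 2
    else cost0110 (i + 3) w + 3

theorem isGreedyCost_altCost : IsGreedyCost id (!·) altCost := by
  refine ⟨fun _ => rfl, fun p x w => ?_⟩
  cases p <;> cases x <;> simp [altCost]

theorem isGreedyCost_cost0110 : IsGreedyCost pat0110 (· + 1) cost0110 := by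
  refine ⟨fun _ => rfl, fun i x w => ?_⟩
  fin_cases i <;> cases x <;> simp [cost0110, pat0110]

theorem repPrefix_10_eq_cycleWord (m : ℕ) :
    repPrefix [true, false] m = cycleWord id (!·) true m :=
  repPrefix_eq_cycleWord (by simp) rfl rfl m

theorem repPrefix_0110_eq_cycleWord (m : ℕ) :
    repPrefix [false, true, true, false] m = cycleWord pat0110 (· + 1) 0 m :=
  repPrefix_eq_cycleWord (by simp) rfl (by decide) m

theorem sublist_repPrefix_10_iff (m : ℕ) (w : List Bool) :
    w.Sublist (repPrefix [true, false] m) ↔ altCost true w ≤ m := by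
  rw [repPrefix_10_eq_cycleWord, sublist_cycleWord_iff isGreedyCost_altCost]

theorem sublist_repPrefix_0110_iff (m : ℕ) (w : List Bool) :
    w.Sublist (repPrefix [false, true, true, false] m) ↔ cost0110 0 w ≤ m := by
  rw [repPrefix_0110_eq_cycleWord, sublist_cycleWord_iff isGreedyCost_cost0110]

-- Stated for all four phases of `0110` so that the induction closes.
theorem four_mul_length_le_costs (w : List Bool) (i : Fin 4) :
    4 * w.length ≤ 2 * altCost (i.val < 2) w + cost0110 i w + i.val % 2 := by
  induction w generalizing i with
  | nil => fin_cases i <;> simp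
  | cons x w ih =>
    have := ih 0; have := ih 1; have := ih 2; have := ih 3
    fin_cases i <;> cases x <;> simp [altCost, cost0110, pat0110] at * <;> omega

-- A block `p` or `(!p) p` of `blockWord p` advances the embedding into `10⋯` by 1 or 3 letters
-- and that into `0110⋯` by 2, keeping the two phases paired by `vPhase`.
def vPhase (p : Bool) : Fin 4 := if p then 0 else 2

def jointCost (p : Bool) (w : List Bool) : ℕ := 2 * altCost p w + cost0110 (vPhase p) w

theorem four_mul_length_le_jointCost (p : Bool) (w : List Bool) :
    4 * w.length ≤ jointCost p w := by
  cases p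
  · simpa [jointCost, vPhase] using four_mul_length_le_costs w 2
  · simpa [jointCost, vPhase] using four_mul_length_le_costs w 0

theorem jointCost_cons_self (p : Bool) (w : List Bool) :
    jointCost p (p :: w) = jointCost (!p) w + 4 := by
  cases p <;> simp [jointCost, vPhase, altCost, cost0110, pat0110] <;> omega

theorem jointCost_cons_not_cons_self (p : Bool) (w : List Bool) :
    jointCost p ((!p) :: p :: w) = jointCost (!p) w + 8 := by
  cases p <;> simp [jointCost, vPhase, altCost, cost0110, pat0110] <;> omega

theorem jointCost_cons_not_cons_not (p : Bool) (w : List Bool) :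
    jointCost p ((!p) :: (!p) :: w) = jointCost p w + 12 := by
  cases p <;> simp [jointCost, vPhase, altCost, cost0110, pat0110] <;> omega

def blockWord : Bool → List Bool → List Bool
  | _, [] => []
  | p, b :: ε => (if b then [!p, p] else [p]) ++ blockWord (!p) ε

-- `blockWord p ε` followed by the first letter of one further long block.
def blockWordOpen (p : Bool) (ε : List Bool) : List Bool :=
  blockWord p ε ++ [!(!·)^[ε.length] p]

-- Two letters `!p` in phase `p` cost 12 rather than 8, more than the slack allows.
theorem eq_blockWord_of_jointCost_le :
    ∀ (p : Bool) (w : List Bool), jointCost p w ≤ 4 * w.length + 2 →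
      (∃ ε, w = blockWord p ε) ∨ ∃ ε, w = blockWordOpen p ε
  | p, [], _ => .inl ⟨[], rfl⟩
  | p, [x], _ => by
    rcases eq_or_ne x p with rfl | hx
    · exact .inl ⟨[false], rfl⟩
    · exact .inr ⟨[], by simp [blockWordOpen, blockWord, Bool.eq_not_of_ne hx]⟩
  | p, x :: y :: w, h => by
    rcases eq_or_ne x p with rfl | hx
    · rw [jointCost_cons_self, List.length_cons] at h
      rcases eq_blockWord_of_jointCost_le (!x) (y :: w) (by omega) with ⟨ε, hε⟩ | ⟨ε, hε⟩
      · exact .inl ⟨false :: ε, by simp [blockWord, hε]⟩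
      · exact .inr ⟨false :: ε,
          by simp [blockWordOpen, blockWord, hε, Function.iterate_succ_apply]⟩
    rw [Bool.eq_not_of_ne hx] at h ⊢
    rcases eq_or_ne y p with rfl | hy
    · rw [jointCost_cons_not_cons_self, List.length_cons, List.length_cons] at h
      rcases eq_blockWord_of_jointCost_le (!y) w (by omega) with ⟨ε, hε⟩ | ⟨ε, hε⟩
      · exact .inl ⟨true :: ε, by simp [blockWord, hε]⟩
      · exact .inr ⟨true :: ε,
          by simp [blockWordOpen, blockWord, hε, Function.iterate_succ_apply]⟩
    · rw [Bool.eq_not_of_ne hy, jointCost_cons_not_cons_not, List.length_cons,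
        List.length_cons] at h
      have := four_mul_length_le_jointCost p w
      omega

theorem length_blockWord (p : Bool) (ε : List Bool) :
    (blockWord p ε).length = ε.length + ε.count true := by
  induction ε generalizing p with
  | nil => rfl
  | cons b ε ih => cases b <;> simp [blockWord, ih] <;> omega

theorem altCost_blockWord_append (p : Bool) (ε r : List Bool) :
    altCost p (blockWord p ε ++ r) =
      ε.length + 2 * ε.count true + altCost ((!·)^[ε.length] p) r := by
  induction ε generalizing p with
  | nil => simp [blockWord]
  | cons b ε ih =>
    cases b <;> cases p <;> simp [blockWord, altCost, ih, Function.iterate_succ_apply] <;> omega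

theorem cost0110_blockWord_append (p : Bool) (ε r : List Bool) :
    cost0110 (vPhase p) (blockWord p ε ++ r) =
      2 * ε.length + cost0110 (vPhase ((!·)^[ε.length] p)) r := by
  induction ε generalizing p with
  | nil => simp [blockWord]
  | cons b ε ih =>
    have := ih (!p)
    cases b <;> cases p <;> simp_all [blockWord, vPhase, cost0110, pat0110,
      Function.iterate_succ_apply] <;> omega

theorem blockWord_injective (p : Bool) : Function.Injective (blockWord p) := by
  intro ε₁ ε₂ h
  induction ε₁ generalizing p ε₂ with
  | nil => cases ε₂ with
    | nil => rfl
    | cons b ε => cases b <;> simp [blockWord] at h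
  | cons b₁ ε₁ ih =>
    cases ε₂ with
    | nil => cases b₁ <;> simp [blockWord] at h
    | cons b₂ ε₂ => cases b₁ <;> cases b₂ <;> simp [blockWord] at h ⊢ <;> exact ih _ h

theorem length_blockWordOpen (p : Bool) (ε : List Bool) :
    (blockWordOpen p ε).length = ε.length + ε.count true + 1 := by
  simp [blockWordOpen, length_blockWord]

theorem altCost_blockWordOpen (p : Bool) (ε : List Bool) :
    altCost p (blockWordOpen p ε) = ε.length + 2 * ε.count true + 2 := by
  rw [blockWordOpen, altCost_blockWord_append]
  cases (!·)^[ε.length] p <;> rfl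

theorem cost0110_blockWordOpen (p : Bool) (ε : List Bool) :
    cost0110 (vPhase p) (blockWordOpen p ε) = 2 * ε.length + 1 := by
  rw [blockWordOpen, cost0110_blockWord_append]
  cases (!·)^[ε.length] p <;> rfl

theorem altCost_blockWord (p : Bool) (ε : List Bool) :
    altCost p (blockWord p ε) = ε.length + 2 * ε.count true := by
  simpa [altCost] using altCost_blockWord_append p ε []

theorem cost0110_blockWord (p : Bool) (ε : List Bool) :
    cost0110 (vPhase p) (blockWord p ε) = 2 * ε.length := by
  simpa [cost0110] using cost0110_blockWord_append p ε []

theorem blockWordOpen_injective (p : Bool) : Function.Injective (blockWordOpen p) :=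
  fun _ _ h => blockWord_injective p (List.append_inj' h rfl).1

theorem blockWord_ne_blockWordOpen (p : Bool) (ε ε' : List Bool) :
    blockWord p ε ≠ blockWordOpen p ε' := by
  intro h
  have := congrArg (cost0110 (vPhase p)) h
  rw [cost0110_blockWord, cost0110_blockWordOpen] at this
  omega

def boolLists : ℕ → Finset (List Bool)
  | 0 => {[]}
  | n + 1 => (boolLists n).image (List.cons true) ∪ (boolLists n).image (List.cons false)

theorem mem_boolLists {n : ℕ} {ε : List Bool} : ε ∈ boolLists n ↔ ε.length = n := by
  induction n generalizing ε with
  | zero => simp [boolLists]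
  | succ n ih =>
    cases ε with
    | nil => simp [boolLists]
    | cons b ε => cases b <;> simp [boolLists, ih]

theorem card_boolLists_filter_count (n k : ℕ) :
    ((boolLists n).filter (·.count true = k)).card = n.choose k := by
  induction n generalizing k with
  | zero => cases k <;> simp [boolLists, Finset.filter_singleton]
  | succ n ih =>
    rw [boolLists, Finset.filter_union, Finset.filter_image, Finset.filter_image,
      Finset.card_union_of_disjoint, Finset.card_image_of_injective _ (List.cons_injective),
      Finset.card_image_of_injective _ (List.cons_injective)]
    · cases k with
      | zero => simp [ih]
      | succ k => simp [ih, Nat.choose_succ_succ']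
    · simp only [Finset.disjoint_left, Finset.mem_image]
      rintro _ ⟨_, -, rfl⟩ ⟨_, -, h⟩
      simp at h

section

variable {d : ℕ}

theorem sublist_and_sublist_repPrefix_iff {w : List Bool} :
    w.Sublist (repPrefix [true, false] (4 * d + 2)) ∧
        w.Sublist (repPrefix [false, true, true, false] (4 * d + 2)) ↔
      altCost true w ≤ 4 * d + 2 ∧ cost0110 (vPhase true) w ≤ 4 * d + 2 := by
  rw [sublist_repPrefix_10_iff, sublist_repPrefix_0110_iff]
  rfl

theorem length_le_of_sublist_repPrefix {w : List Bool}
    (hu : w.Sublist (repPrefix [true, false] (4 * d + 2)))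
    (hv : w.Sublist (repPrefix [false, true, true, false] (4 * d + 2))) :
    w.length ≤ 3 * d + 1 := by
  obtain ⟨hA, hB⟩ := sublist_and_sublist_repPrefix_iff.1 ⟨hu, hv⟩
  have := four_mul_length_le_jointCost true w
  rw [jointCost] at this
  omega

theorem LCSlen_repPrefix :
    LCSlen (repPrefix [true, false] (4 * d + 2))
      (repPrefix [false, true, true, false] (4 * d + 2)) = 3 * d + 1 := by
  set ε := List.replicate d true ++ List.replicate (d + 1) false
  have hlen : ε.length = 2 * d + 1 := by
    simp only [ε, List.length_append, List.length_replicate]; omega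
  have hcount : ε.count true = d := by simp [ε, List.count_replicate]
  obtain ⟨hu, hv⟩ := (sublist_and_sublist_repPrefix_iff (d := d) (w := blockWord true ε)).2
    ⟨by rw [altCost_blockWord]; omega, by rw [cost0110_blockWord]; omega⟩
  refine IsGreatest.csSup_eq ⟨⟨blockWord true ε, hu, hv, ?_⟩, ?_⟩
  · rw [length_blockWord]; omega
  · rintro _ ⟨w, hu, hv, rfl⟩
    exact length_le_of_sublist_repPrefix hu hv

variable (d) in
def lcsFinset : Finset (List Bool) :=
  ((boolLists (2 * d + 1)).filter (·.count true = d)).image (blockWord true) ∪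
    ((boolLists (2 * d)).filter (·.count true = d + 1)).image (blockWord true) ∪
    ((boolLists (2 * d)).filter (·.count true = d)).image (blockWordOpen true)

theorem longest_common_sublists_eq_lcsFinset :
    {w : List Bool | w.Sublist (repPrefix [true, false] (4 * d + 2)) ∧
        w.Sublist (repPrefix [false, true, true, false] (4 * d + 2)) ∧ w.length = 3 * d + 1} =
      lcsFinset d := by
  ext w
  simp only [Set.mem_ofPred_eq, ← and_assoc, sublist_and_sublist_repPrefix_iff, lcsFinset, Finset.coe_union,
    Finset.coe_image, Finset.coe_filter, mem_boolLists, Set.mem_union, Set.mem_image]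
  constructor
  · rintro ⟨⟨hA, hB⟩, hl⟩
    have hcost : jointCost true w ≤ 4 * w.length + 2 := by rw [jointCost]; omega
    rcases eq_blockWord_of_jointCost_le true w hcost with ⟨ε, rfl⟩ | ⟨ε, rfl⟩
    · rw [altCost_blockWord] at hA
      rw [cost0110_blockWord] at hB
      rw [length_blockWord] at hl
      rcases (by omega : ε.length = 2 * d + 1 ∧ ε.count true = d ∨
          ε.length = 2 * d ∧ ε.count true = d + 1) with h | h
      · exact .inl (.inl ⟨ε, h, rfl⟩)
      · exact .inl (.inr ⟨ε, h, rfl⟩)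
    · rw [altCost_blockWordOpen] at hA
      rw [cost0110_blockWordOpen] at hB
      rw [length_blockWordOpen] at hl
      exact .inr ⟨ε, by omega, rfl⟩
  · rintro ((⟨ε, ⟨hl, hk⟩, rfl⟩ | ⟨ε, ⟨hl, hk⟩, rfl⟩) | ⟨ε, ⟨hl, hk⟩, rfl⟩)
    · rw [altCost_blockWord, cost0110_blockWord, length_blockWord]; omega
    · rw [altCost_blockWord, cost0110_blockWord, length_blockWord]; omega
    · rw [altCost_blockWordOpen, cost0110_blockWordOpen, length_blockWordOpen]; omega

theorem card_lcsFinset : (lcsFinset d).card = (2 * d + 2).choose (d + 1) := by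
  rw [lcsFinset, Finset.card_union_of_disjoint, Finset.card_union_of_disjoint,
    Finset.card_image_of_injective _ (blockWord_injective true),
    Finset.card_image_of_injective _ (blockWord_injective true),
    Finset.card_image_of_injective _ (blockWordOpen_injective true),
    card_boolLists_filter_count, card_boolLists_filter_count, card_boolLists_filter_count,
    Nat.choose_succ_succ', Nat.choose_succ_succ' (2 * d)]
  · omega
  · rw [Finset.disjoint_image (blockWord_injective true), Finset.disjoint_left]
    simp only [Finset.mem_filter, mem_boolLists]
    omega
  · simp only [Finset.disjoint_left, Finset.mem_union, Finset.mem_image]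
    rintro _ (⟨ε, -, rfl⟩ | ⟨ε, -, rfl⟩) ⟨ε', -, h⟩ <;>
      exact blockWord_ne_blockWordOpen true ε ε' h.symm

end

theorem stmt11 (c : ℕ) (hc : 1 ≤ c) :
    delDist (repPrefix [true, false] (4 * c - 2))
        (repPrefix [false, true, true, false] (4 * c - 2)) = c ∧
    mLCS (repPrefix [true, false] (4 * c - 2))
        (repPrefix [false, true, true, false] (4 * c - 2)) = (2 * c).choose c := by
  obtain ⟨d, rfl⟩ := Nat.exists_eq_add_of_le' hc
  rw [show 4 * (d + 1) - 2 = 4 * d + 2 by omega, show 2 * (d + 1) = 2 * d + 2 by ring]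
  constructor
  · rw [delDist, LCSlen_repPrefix, repPrefix_10_eq_cycleWord, length_cycleWord]
    omega
  · rw [mLCS, LCSlen_repPrefix, longest_common_sublists_eq_lcsFinset, Set.ncard_coe_finset,
      card_lcsFinset]
end

section
/- Define ℓ(a,b) := LCS((10)^⟨a⟩, (0110)^⟨b⟩). For all integers a, b ≥ 0 with b even: ℓ(a,b) = a if a ≤ b/2; ℓ(a,b) = b/2 + ⌊(2a − b)/4⌋ if b/2 < a ≤ 3b/2; and ℓ(a,b) = b if a > 3b/2. -/
/-!
Reading the two periodic words from arbitrary starting positions `p` (period 2) and `q`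
(period 4), the LCS of prefixes of lengths `a` and `b` is `min a b ⌊(2a + b + s - 1)/4⌋`,
where `s = (2p + q + 1) mod 4` is their relative phase. Over all phases this closed form
satisfies the standard LCS recursion (first letters equal exactly when `s ≥ 2`), so it
follows by induction on `a` and `b`; the theorem is the case `p = q = 0`, read off for even `b`.
-/

section LCS

variable {α : Type*} [DecidableEq α]

def lcs : List α → List α → ℕ
  | [], _ => 0
  | _ :: _, [] => 0
  | x :: u, y :: v =>
    if x = y then lcs u v + 1
    else max (lcs (x :: u) v) (lcs u (y :: v))
termination_by u v => u.length + v.length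

@[simp] lemma lcs_nil_left (v : List α) : lcs [] v = 0 := by rw [lcs]

@[simp] lemma lcs_nil_right (u : List α) : lcs u [] = 0 := by
  cases u <;> rw [lcs]

lemma lcs_cons_cons (x y : α) (u v : List α) :
    lcs (x :: u) (y :: v) =
      if x = y then lcs u v + 1 else max (lcs (x :: u) v) (lcs u (y :: v)) := by
  rw [lcs]

lemma length_le_lcs {u v w : List α} (hu : w.Sublist u) (hv : w.Sublist v) :
    w.length ≤ lcs u v := by
  induction u, v using lcs.induct generalizing w with
  | case1 v => simp [List.sublist_nil.mp hu]
  | case2 x u => simp [List.sublist_nil.mp hv]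
  | case3 u x v ih =>
    have := ih hu.tail hv.tail
    rw [lcs_cons_cons, if_pos rfl, List.length_tail] at *
    omega
  | case4 x u y v hxy ih₁ ih₂ =>
    rw [lcs_cons_cons, if_neg hxy]
    cases w with
    | nil => simp
    | cons c w =>
      by_cases hcx : c = x
      · exact (ih₁ hu (hv.of_cons_of_ne (hcx ▸ hxy))).trans (le_max_left _ _)
      · exact (ih₂ (hu.of_cons_of_ne hcx) hv).trans (le_max_right _ _)

lemma exists_sublist_length_eq_lcs (u v : List α) :
    ∃ w : List α, w.Sublist u ∧ w.Sublist v ∧ w.length = lcs u v := by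
  induction u, v using lcs.induct with
  | case1 v => exact ⟨[], List.nil_sublist _, List.nil_sublist _, by simp⟩
  | case2 x u => exact ⟨[], List.nil_sublist _, List.nil_sublist _, by simp⟩
  | case3 u x v ih =>
    obtain ⟨w, hu, hv, hw⟩ := ih
    exact ⟨x :: w, hu.cons_cons x, hv.cons_cons x, by rw [lcs_cons_cons, if_pos rfl]; simp [hw]⟩
  | case4 x u y v hxy ih₁ ih₂ =>
    rw [lcs_cons_cons, if_neg hxy]
    rcases le_total (lcs u (y :: v)) (lcs (x :: u) v) with h | h
    · obtain ⟨w, hu, hv, hw⟩ := ih₁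
      exact ⟨w, hu, hv.trans (List.sublist_cons_self y v), by omega⟩
    · obtain ⟨w, hu, hv, hw⟩ := ih₂
      exact ⟨w, hu.trans (List.sublist_cons_self x u), hv, by omega⟩

end LCS

lemma LCSlen_eq_lcs (u v : List Bool) : LCSlen u v = lcs u v := by
  refine IsGreatest.csSup_eq ⟨exists_sublist_length_eq_lcs u v, ?_⟩
  rintro m ⟨w, hu, hv, rfl⟩
  exact length_le_lcs hu hv

lemma getElem?_flatten_replicate {α : Type*} (x : List α) {m i : ℕ} (hi : i < m * x.length) :
    (List.replicate m x).flatten[i]? = x[i % x.length]? := by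
  induction m generalizing i with
  | zero => simp at hi
  | succ m ih =>
    rw [List.replicate_succ, List.flatten_cons, List.getElem?_append]
    split_ifs with h
    · rw [Nat.mod_eq_of_lt h]
    · rw [ih (by rw [Nat.succ_mul] at hi; omega), ← Nat.mod_eq_sub_mod (not_lt.mp h)]

lemma repPrefix_eq_map_range' {x : List Bool} {f : ℕ → Bool}
    (hf : ∀ i, x[i % x.length]? = some (f i)) (m : ℕ) :
    repPrefix x m = (List.range' 0 m).map f := by
  have hx : 0 < x.length := by
    by_contra h
    simpa [Nat.eq_zero_of_not_pos h] using hf 0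
  refine List.ext_getElem? fun i => ?_
  rw [repPrefix, List.getElem?_take, List.getElem?_map]
  split_ifs with hi
  · rw [getElem?_flatten_replicate x (by nlinarith), hf, List.getElem?_range' hi]
    simp
  · rw [List.getElem?_eq_none (by simpa using not_lt.mp hi)]
    rfl

def lcsFormula (s a b : ℕ) : ℕ := min a (min b ((2 * a + b + s - 1) / 4))

lemma lcsFormula_succ_succ_of_two_le {s : ℕ} (hs : 2 ≤ s) (hs4 : s < 4) (a b : ℕ) :
    lcsFormula s (a + 1) (b + 1) = lcsFormula (s - 1) a b + 1 := by
  interval_cases s <;> simp only [lcsFormula] <;> omega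

lemma lcsFormula_succ_succ_of_lt_two {s : ℕ} (hs : s < 2) (a b : ℕ) :
    lcsFormula s (a + 1) (b + 1)
      = max (lcsFormula (s + 1) (a + 1) b) (lcsFormula (s + 2) a (b + 1)) := by
  interval_cases s <;> simp only [lcsFormula] <;> omega

lemma lcs_periodic_eq_lcsFormula (a b p q : ℕ) :
    lcs ((List.range' p a).map fun i => decide (i % 2 = 0))
        ((List.range' q b).map fun j => decide (j % 4 = 1 ∨ j % 4 = 2))
      = lcsFormula ((2 * p + q + 1) % 4) a b := by
  induction a generalizing b p q with
  | zero => simp [lcsFormula]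
  | succ a iha =>
    induction b generalizing p q with
    | zero => simp [lcsFormula]
    | succ b ihb =>
      rw [List.range'_succ, List.range'_succ, List.map_cons, List.map_cons, lcs_cons_cons]
      have hs : (2 * p + q + 1) % 4 < 4 := Nat.mod_lt _ (by norm_num)
      split_ifs with h
      · rw [decide_eq_decide] at h
        rw [iha, lcsFormula_succ_succ_of_two_le (by omega) hs]
        congr 2; omega
      · rw [decide_eq_decide] at h
        have h₁ := ihb p (q + 1)
        have h₂ := iha (b + 1) (p + 1) q
        rw [List.range'_succ, List.map_cons] at h₁ h₂
        rw [h₁, h₂, lcsFormula_succ_succ_of_lt_two (by omega)]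
        congr 2 <;> omega

theorem stmt12 (a b : ℕ) (hb : Even b) :
    (a ≤ b / 2 →
      LCSlen (repPrefix [true, false] a) (repPrefix [false, true, true, false] b) = a) ∧
    (b / 2 < a → a ≤ 3 * b / 2 →
      LCSlen (repPrefix [true, false] a) (repPrefix [false, true, true, false] b)
        = b / 2 + (2 * a - b) / 4) ∧
    (3 * b / 2 < a →
      LCSlen (repPrefix [true, false] a) (repPrefix [false, true, true, false] b) = b) := by
  have hu : repPrefix [true, false] a = (List.range' 0 a).map fun i => decide (i % 2 = 0) := by
    refine repPrefix_eq_map_range' (fun i => ?_) a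
    rcases Nat.mod_two_eq_zero_or_one i with h | h <;> simp [h]
  have hv : repPrefix [false, true, true, false] b
      = (List.range' 0 b).map fun j => decide (j % 4 = 1 ∨ j % 4 = 2) := by
    refine repPrefix_eq_map_range' (fun j => ?_) b
    have : j % 4 < 4 := Nat.mod_lt _ (by norm_num)
    interval_cases j % 4 <;> simp
  have key : LCSlen (repPrefix [true, false] a) (repPrefix [false, true, true, false] b)
      = min a (min b ((2 * a + b) / 4)) := by
    rw [LCSlen_eq_lcs, hu, hv, lcs_periodic_eq_lcsFormula]
    rfl
  obtain ⟨k, rfl⟩ := hb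
  refine ⟨fun h₁ => ?_, fun h₁ h₂ => ?_, fun h₁ => ?_⟩ <;> rw [key] <;> omega
end

section
/- For all natural numbers a and b there exists n₀ such that for every integer n ≥ n₀ there exist binary words u and v of lengths n − a and n − b respectively with SCS(u,v) = n (equivalently LCS(u,v) = n − a − b) and m_LCS(u,v) = m_SCS(u,v) = binomial(a+b, a). -/
/-!
Write 1 for `true` and 0 for `false`, and let `#₀`, `#₁` count letters. Every common sublist `w`
of `x` and `y` satisfies `|w| ≤ #₀x + #₁y`, and every common superlist satisfies
`|w| ≥ #₁x + #₀y`. For `x = 1ᵗ(10)^(a+2b)` and `y = 1ᵗ(100)^(a+b)` both bounds are attained: the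
extremal sublists are `1ᵗ` followed by `a` blocks `10` and `b` blocks `100` in any order, the
extremal superlists `1ᵗ` followed by `a` blocks `100` and `b` blocks `1010`. Peeling off the first
letters of `x` and `y` shows that both families obey Pascal's recursion, so each has
`(a + b).choose a` members.
-/

open List

namespace List

theorem count_cons_add_count_not_cons (a b : Bool) (x y : List Bool) :
    (a :: x).count b + (a :: y).count (!b) = x.count b + y.count (!b) + 1 := by
  cases a <;> cases b <;> grind

theorem Sublist.length_le_count_false_add_count_true {w x y : List Bool} (hx : w <+ x)
    (hy : w <+ y) : w.length ≤ x.count false + y.count true := by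
  have := hx.count_le false
  have := hy.count_le true
  have := w.count_true_add_count_false
  omega

theorem Sublist.count_true_add_count_false_le_length {w x y : List Bool} (hx : x <+ w)
    (hy : y <+ w) : x.count true + y.count false ≤ w.length := by
  have := hx.count_le true
  have := hy.count_le false
  have := w.count_true_add_count_false
  omega

end List

/-- The common sublists attaining the bound `Sublist.length_le_count_false_add_count_true`;
when there are any, they are the longest common sublists. -/
def tightSublists (x y : List Bool) : Set (List Bool) :=
  {w | w <+ x ∧ w <+ y ∧ w.length = x.count false + y.count true}

/-- The common superlists attaining the bound `Sublist.count_true_add_count_false_le_length`;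
when there are any, they are the shortest common superlists. -/
def tightSuperlists (x y : List Bool) : Set (List Bool) :=
  {w | x <+ w ∧ y <+ w ∧ w.length = x.count true + y.count false}

section Tight

variable {w x y : List Bool}

theorem LCSlen_eq_of_mem_tightSublists (hw : w ∈ tightSublists x y) :
    LCSlen x y = x.count false + y.count true :=
  IsGreatest.csSup_eq ⟨⟨w, hw⟩, by
    rintro _ ⟨w', hx, hy, rfl⟩
    exact hx.length_le_count_false_add_count_true hy⟩

theorem SCSlen_eq_of_mem_tightSuperlists (hw : w ∈ tightSuperlists x y) :
    SCSlen x y = x.count true + y.count false :=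
  IsLeast.csInf_eq ⟨⟨w, hw⟩, by
    rintro _ ⟨w', hx, hy, rfl⟩
    exact hx.count_true_add_count_false_le_length hy⟩

theorem mLCS_eq_ncard_tightSublists (h : (tightSublists x y).Nonempty) :
    mLCS x y = (tightSublists x y).ncard := by
  obtain ⟨w, hw⟩ := h
  rw [mLCS, LCSlen_eq_of_mem_tightSublists hw]
  rfl

theorem mSCS_eq_ncard_tightSuperlists (h : (tightSuperlists x y).Nonempty) :
    mSCS x y = (tightSuperlists x y).ncard := by
  obtain ⟨w, hw⟩ := h
  rw [mSCS, SCSlen_eq_of_mem_tightSuperlists hw]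
  rfl

theorem counts_le_of_mem_tightSublists (hw : w ∈ tightSublists x y) :
    y.count true ≤ x.count true ∧ x.count false ≤ y.count false := by
  obtain ⟨hx, hy, hl⟩ := hw
  have := hx.count_le true
  have := hy.count_le false
  have := w.count_true_add_count_false
  have := hx.count_le false
  have := hy.count_le true
  omega

theorem counts_le_of_mem_tightSuperlists (hw : w ∈ tightSuperlists x y) :
    y.count true ≤ x.count true ∧ x.count false ≤ y.count false := by
  obtain ⟨hx, hy, hl⟩ := hw
  have := hx.count_le true
  have := hy.count_le false
  have := w.count_true_add_count_false
  have := hx.count_le false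
  have := hy.count_le true
  omega

end Tight

theorem tightSublists_finite (x y : List Bool) : (tightSublists x y).Finite :=
  (List.finite_length_le Bool x.length).subset fun _ hw => hw.1.length_le

theorem tightSuperlists_finite (x y : List Bool) : (tightSuperlists x y).Finite :=
  (List.finite_length_eq Bool _).subset fun _ hw => hw.2.2

theorem tightSublists_cons_cons (a : Bool) (x y : List Bool) :
    tightSublists (a :: x) (a :: y) = (a :: ·) '' tightSublists x y := by
  have hcount : (a :: x).count false + (a :: y).count true = x.count false + y.count true + 1 :=
    count_cons_add_count_not_cons a false x y
  ext w
  constructor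
  · rintro ⟨hx, hy, hl⟩
    rcases sublist_cons_iff.1 hx with hx' | ⟨r, rfl, hr⟩
    · rcases sublist_cons_iff.1 hy with hy' | ⟨r, rfl, hr'⟩
      · have := hx'.length_le_count_false_add_count_true hy'
        omega
      · refine ⟨r, ⟨cons_sublist_cons.1 hx, hr', ?_⟩, rfl⟩
        simp only [length_cons] at hl
        omega
    · refine ⟨r, ⟨hr, cons_sublist_cons.1 hy, ?_⟩, rfl⟩
      simp only [length_cons] at hl
      omega
  · rintro ⟨w, ⟨hx, hy, hl⟩, rfl⟩
    exact ⟨hx.cons_cons a, hy.cons_cons a, by simp only [length_cons]; omega⟩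

theorem tightSublists_true_false (x y : List Bool) :
    tightSublists (true :: x) (false :: y) =
      tightSublists x (false :: y) ∪ tightSublists (true :: x) y := by
  ext w
  simp only [tightSublists, Set.mem_union, Set.mem_ofPred_eq,
    count_cons_of_ne (show true ≠ false by decide),
    count_cons_of_ne (show false ≠ true by decide)]
  constructor
  · rintro ⟨hx, hy, hl⟩
    cases w with
    | nil => exact .inl ⟨nil_sublist _, hy, hl⟩
    | cons b w =>
      cases b
      · exact .inl ⟨hx.of_cons_of_ne (by decide), hy, hl⟩
      · exact .inr ⟨hx, hy.of_cons_of_ne (by decide), hl⟩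
  · rintro (⟨hx, hy, hl⟩ | ⟨hx, hy, hl⟩)
    · exact ⟨hx.cons _, hy, hl⟩
    · exact ⟨hx, hy.cons _, hl⟩

theorem false_cons_not_mem_tightSublists_true_cons (w x y : List Bool) :
    false :: w ∉ tightSublists x (true :: y) := by
  rintro ⟨hx, hy, hl⟩
  have := hx.length_le_count_false_add_count_true (hy.of_cons_of_ne (by decide))
  simp only [count_cons_self] at hl
  omega

theorem tightSuperlists_cons_cons (a : Bool) (x y : List Bool) :
    tightSuperlists (a :: x) (a :: y) = (a :: ·) '' tightSuperlists x y := by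
  have hcount : (a :: x).count true + (a :: y).count false = x.count true + y.count false + 1 :=
    count_cons_add_count_not_cons a true x y
  ext w
  constructor
  · rintro ⟨hx, hy, hl⟩
    obtain ⟨b, w, rfl⟩ := exists_cons_of_ne_nil (show w ≠ [] by rintro rfl; simp at hx)
    by_cases hb : b = a
    · subst hb
      refine ⟨w, ⟨cons_sublist_cons.1 hx, cons_sublist_cons.1 hy, ?_⟩, rfl⟩
      simp only [length_cons] at hl
      omega
    · have := (hx.of_cons_of_ne (Ne.symm hb)).count_true_add_count_false_le_length
        (hy.of_cons_of_ne (Ne.symm hb))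
      simp only [length_cons] at hl
      omega
  · rintro ⟨w, ⟨hx, hy, hl⟩, rfl⟩
    exact ⟨hx.cons_cons a, hy.cons_cons a, by simp only [length_cons]; omega⟩

theorem tightSuperlists_true_false (x y : List Bool) :
    tightSuperlists (true :: x) (false :: y) =
      (true :: ·) '' tightSuperlists x (false :: y) ∪
        (false :: ·) '' tightSuperlists (true :: x) y := by
  ext w
  constructor
  · rintro ⟨hx, hy, hl⟩
    obtain ⟨b, w, rfl⟩ := exists_cons_of_ne_nil (show w ≠ [] by rintro rfl; simp at hx)
    simp only [length_cons, count_cons_self] at hl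
    cases b
    · refine .inr ⟨w, ⟨hx.of_cons_of_ne (by decide), cons_sublist_cons.1 hy, ?_⟩, rfl⟩
      simp only [count_cons_self]
      omega
    · refine .inl ⟨w, ⟨cons_sublist_cons.1 hx, hy.of_cons_of_ne (by decide), ?_⟩, rfl⟩
      simp only [count_cons_self]
      omega
  · rintro (⟨w, ⟨hx, hy, hl⟩, rfl⟩ | ⟨w, ⟨hx, hy, hl⟩, rfl⟩)
    · exact ⟨hx.cons_cons _, hy.cons _, by simp only [length_cons, hl, count_cons_self]; omega⟩
    · exact ⟨hx.cons _, hy.cons_cons _, by simp only [length_cons, hl, count_cons_self]; omega⟩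

theorem tightSublists_append_append (p x y : List Bool) :
    tightSublists (p ++ x) (p ++ y) = (p ++ ·) '' tightSublists x y := by
  induction p with
  | nil => simp
  | cons a p ih => rw [cons_append, cons_append, tightSublists_cons_cons, ih, Set.image_image]; rfl

theorem tightSuperlists_append_append (p x y : List Bool) :
    tightSuperlists (p ++ x) (p ++ y) = (p ++ ·) '' tightSuperlists x y := by
  induction p with
  | nil => simp
  | cons a p ih =>
    rw [cons_append, cons_append, tightSuperlists_cons_cons, ih, Set.image_image]; rfl

theorem eq_choose_of_pascal (N : ℕ → ℕ → ℕ) (h00 : N 0 0 = 1) (h11 : N 1 1 = 1)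
    (hzero : ∀ k γ, k < γ ∨ 2 * γ < k → N k γ = 0)
    (hstep : ∀ k γ, N (k + 2) (γ + 1) = N (k + 1) γ + N k γ) (γ j : ℕ) :
    N (γ + j) γ = γ.choose j := by
  induction γ generalizing j with
  | zero =>
    cases j with
    | zero => simpa using h00
    | succ j => simpa using hzero (j + 1) 0 (by omega)
  | succ γ ih =>
    cases j with
    | zero =>
      cases γ with
      | zero => simpa using h11
      | succ γ =>
        have := ih 0
        rw [hstep, hzero γ (γ + 1) (by omega)]
        simpa using this
    | succ j =>
      rw [show γ + 1 + (j + 1) = γ + j + 2 by omega, hstep, Nat.choose_succ_succ',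
        show γ + j + 1 = γ + (j + 1) by omega, ih, ih, add_comm]

theorem ncard_image_union_image {α β δ : Type*} {f : α → δ} {g : β → δ}
    (hf : f.Injective) (hg : g.Injective) {s : Set α} {t : Set β} (hs : s.Finite) (ht : t.Finite)
    (hdisj : Disjoint (f '' s) (g '' t)) : (f '' s ∪ g '' t).ncard = s.ncard + t.ncard := by
  rw [Set.ncard_union_eq hdisj (hs.image f) (ht.image g), Set.ncard_image_of_injective s hf,
    Set.ncard_image_of_injective t hg]

def rep10 (k : ℕ) : List Bool := (replicate k [true, false]).flatten

def rep100 (k : ℕ) : List Bool := (replicate k [true, false, false]).flatten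

@[simp] theorem rep10_zero : rep10 0 = [] := rfl

@[simp] theorem rep10_succ (k : ℕ) : rep10 (k + 1) = true :: false :: rep10 k := rfl

@[simp] theorem rep100_zero : rep100 0 = [] := rfl

@[simp] theorem rep100_succ (k : ℕ) : rep100 (k + 1) = true :: false :: false :: rep100 k := rfl

@[simp] theorem count_rep10 (b : Bool) (k : ℕ) : (rep10 k).count b = k := by
  induction k with
  | zero => rfl
  | succ k ih => cases b <;> simp [ih]

@[simp] theorem count_rep100_true (k : ℕ) : (rep100 k).count true = k := by
  induction k with
  | zero => rfl
  | succ k ih => simp [ih]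

@[simp] theorem count_rep100_false (k : ℕ) : (rep100 k).count false = 2 * k := by
  induction k with
  | zero => rfl
  | succ k ih => simp [ih, Nat.mul_succ]

@[simp] theorem length_rep10 (k : ℕ) : (rep10 k).length = 2 * k := by
  rw [← count_true_add_count_false, count_rep10, count_rep10, two_mul]

@[simp] theorem length_rep100 (k : ℕ) : (rep100 k).length = 3 * k := by
  rw [← count_true_add_count_false, count_rep100_true, count_rep100_false]
  ring

theorem tightSublists_rep_add_two (k γ : ℕ) :
    tightSublists (rep10 (k + 2)) (rep100 (γ + 1)) =
      (fun w => true :: false :: w) '' tightSublists (rep10 (k + 1)) (rep100 γ) ∪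
        (fun w => true :: false :: false :: w) '' tightSublists (rep10 k) (rep100 γ) := by
  simp only [rep10_succ, rep100_succ, tightSublists_cons_cons, tightSublists_true_false,
    Set.image_union, Set.image_image, Set.union_comm]

theorem tightSublists_rep_eq_empty {k γ : ℕ} (h : k < γ ∨ 2 * γ < k) :
    tightSublists (rep10 k) (rep100 γ) = ∅ :=
  Set.eq_empty_of_forall_notMem fun _ hw => by
    have := counts_le_of_mem_tightSublists hw
    simp only [count_rep10, count_rep100_true, count_rep100_false] at this
    omega

theorem ncard_tightSublists_rep_add_two (k γ : ℕ) :
    (tightSublists (rep10 (k + 2)) (rep100 (γ + 1))).ncard =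
      (tightSublists (rep10 (k + 1)) (rep100 γ)).ncard +
        (tightSublists (rep10 k) (rep100 γ)).ncard := by
  rw [tightSublists_rep_add_two]
  refine ncard_image_union_image (fun _ _ h => by simpa using h) (fun _ _ h => by simpa using h)
    (tightSublists_finite _ _) (tightSublists_finite _ _) ?_
  rw [Set.disjoint_left]
  rintro _ ⟨w₁, hw₁, rfl⟩ ⟨w₂, -, hw₂⟩
  obtain rfl : w₁ = false :: w₂ := by simpa using hw₂.symm
  cases γ with
  | zero => simpa using hw₁.2.1
  | succ γ => exact false_cons_not_mem_tightSublists_true_cons w₂ _ _ hw₁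

theorem ncard_tightSublists_rep (γ j : ℕ) :
    (tightSublists (rep10 (γ + j)) (rep100 γ)).ncard = γ.choose j := by
  refine eq_choose_of_pascal (fun k γ => (tightSublists (rep10 k) (rep100 γ)).ncard) ?_ ?_
    (fun k γ h => by simp [tightSublists_rep_eq_empty h]) ncard_tightSublists_rep_add_two γ j
  · have : tightSublists [] [] = {[]} := by ext w; simp [tightSublists]
    simp [this]
  · have : tightSublists [] [false] = {[]} := by
      ext w
      constructor
      · rintro ⟨hw, -, -⟩
        exact sublist_nil.1 hw
      · rintro rfl
        simp [tightSublists]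
    simp [tightSublists_cons_cons, this]

theorem tightSuperlists_rep_add_two (k γ : ℕ) :
    tightSuperlists (rep10 (k + 2)) (rep100 (γ + 1)) =
      (fun w => true :: false :: false :: w) '' tightSuperlists (rep10 (k + 1)) (rep100 γ) ∪
        (fun w => true :: false :: true :: false :: w) ''
          tightSuperlists (rep10 k) (rep100 γ) := by
  simp only [rep10_succ, rep100_succ, tightSuperlists_cons_cons, tightSuperlists_true_false,
    Set.image_union, Set.image_image, Set.union_comm]

theorem tightSuperlists_rep_eq_empty {k γ : ℕ} (h : k < γ ∨ 2 * γ < k) :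
    tightSuperlists (rep10 k) (rep100 γ) = ∅ :=
  Set.eq_empty_of_forall_notMem fun _ hw => by
    have := counts_le_of_mem_tightSuperlists hw
    simp only [count_rep10, count_rep100_true, count_rep100_false] at this
    omega

theorem ncard_tightSuperlists_rep_add_two (k γ : ℕ) :
    (tightSuperlists (rep10 (k + 2)) (rep100 (γ + 1))).ncard =
      (tightSuperlists (rep10 (k + 1)) (rep100 γ)).ncard +
        (tightSuperlists (rep10 k) (rep100 γ)).ncard := by
  rw [tightSuperlists_rep_add_two]
  refine ncard_image_union_image (fun _ _ h => by simpa using h) (fun _ _ h => by simpa using h)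
    (tightSuperlists_finite _ _) (tightSuperlists_finite _ _) ?_
  rw [Set.disjoint_left]
  rintro _ ⟨w₁, -, rfl⟩ ⟨w₂, -, hw₂⟩
  simp at hw₂

theorem ncard_tightSuperlists_rep (γ j : ℕ) :
    (tightSuperlists (rep10 (γ + j)) (rep100 γ)).ncard = γ.choose j := by
  refine eq_choose_of_pascal (fun k γ => (tightSuperlists (rep10 k) (rep100 γ)).ncard) ?_ ?_
    (fun k γ h => by simp [tightSuperlists_rep_eq_empty h]) ncard_tightSuperlists_rep_add_two γ j
  · have : tightSuperlists [] [] = {[]} := by ext w; simp [tightSuperlists]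
    simp [this]
  · have : tightSuperlists [] [false] = {[false]} := by
      ext w
      simp only [tightSuperlists, Set.mem_ofPred_eq, Set.mem_singleton_iff]
      constructor
      · rintro ⟨-, hw, hl⟩
        exact (hw.eq_of_length (by simp [hl])).symm
      · rintro rfl
        simp
    simp [tightSuperlists_cons_cons, this]

theorem stmt16 (a b : ℕ) :
    ∃ n₀ : ℕ, ∀ n : ℕ, n₀ ≤ n →
      ∃ u v : List Bool, u.length = n - a ∧ v.length = n - b ∧ SCSlen u v = n ∧
        mLCS u v = (a + b).choose a ∧ mSCS u v = (a + b).choose a := by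
  refine ⟨3 * a + 4 * b, fun n hn => ?_⟩
  set pad := replicate (n - (3 * a + 4 * b)) true
  have hLCS : (tightSublists (pad ++ rep10 (a + b + b)) (pad ++ rep100 (a + b))).ncard =
      (a + b).choose a := by
    rw [tightSublists_append_append, Set.ncard_image_of_injective _ (append_right_injective pad),
      ncard_tightSublists_rep, Nat.choose_symm_add]
  have hSCS : (tightSuperlists (pad ++ rep10 (a + b + b)) (pad ++ rep100 (a + b))).ncard =
      (a + b).choose a := by
    rw [tightSuperlists_append_append, Set.ncard_image_of_injective _ (append_right_injective pad),
      ncard_tightSuperlists_rep, Nat.choose_symm_add]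
  have hpos := (Nat.choose_pos (Nat.le_add_right a b)).ne'
  obtain ⟨w, hw⟩ := Set.nonempty_of_ncard_ne_zero (hSCS ▸ hpos)
  refine ⟨pad ++ rep10 (a + b + b), pad ++ rep100 (a + b), ?_, ?_, ?_, ?_, ?_⟩
  · simp only [pad, length_append, length_replicate, length_rep10]
    omega
  · simp only [pad, length_append, length_replicate, length_rep100]
    omega
  · rw [SCSlen_eq_of_mem_tightSuperlists hw]
    simp only [pad, count_append, count_replicate_self, count_replicate, count_rep10,
      count_rep100_false, beq_false, Bool.not_true, Bool.false_eq_true, ↓reduceIte]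
    omega
  · rw [mLCS_eq_ncard_tightSublists (Set.nonempty_of_ncard_ne_zero (hLCS ▸ hpos)), hLCS]
  · rw [mSCS_eq_ncard_tightSuperlists ⟨w, hw⟩, hSCS]
end

section
/- Define m(a,b) := m_LCS((10)^⟨a⟩, (0110)^⟨b⟩). For all integers a ≥ 3 and even b ≥ 2: m(a,b) = m(a−1, b−2) if a ≤ b/2; m(a,b) = m(a−1, b−2) + m(a−3, b−2) if b/2 < a < 3b/2; and m(a,b) = m(a−3, b−2) if a ≥ 3b/2. -/
namespace LCSPeriodic

open List

section Subsequences

variable {α : Type*}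

def after [DecidableEq α] (x : α) : List α → List α
  | [] => []
  | y :: l => if y = x then l else after x l

theorem cons_sublist_iff_mem_and_sublist_after [DecidableEq α] {x : α} {w l : List α} :
    x :: w <+ l ↔ x ∈ l ∧ w <+ after x l := by
  induction l with
  | nil => simp
  | cons y l ih =>
    rw [sublist_cons_iff]
    by_cases hy : y = x
    · subst hy
      simp only [after, mem_cons_self, true_and, cons.injEq, exists_eq_left']
      exact ⟨fun h => h.elim (fun h => (sublist_cons_self _ _).trans h) id, Or.inr⟩
    · simp [after, hy, ih, Ne.symm hy]

def commonSubseqs (u v : List α) (L : ℕ) : Set (List α) :=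
  {w | w <+ u ∧ w <+ v ∧ w.length = L}

noncomputable def commonCount (u v : List α) (L : ℕ) : ℕ :=
  (commonSubseqs u v L).ncard

theorem commonSubseqs_finite (u v : List α) (L : ℕ) : (commonSubseqs u v L).Finite :=
  u.sublists.finite_toSet.subset fun _ hw => mem_sublists.mpr hw.1

theorem commonCount_comm (u v : List α) (L : ℕ) : commonCount u v L = commonCount v u L := by
  simp only [commonCount, commonSubseqs, and_left_comm]

theorem commonCount_zero (u v : List α) : commonCount u v 0 = 1 := by
  have : commonSubseqs u v 0 = {[]} := by
    ext w
    simp only [commonSubseqs, length_eq_zero_iff, Set.mem_singleton_iff]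
    exact ⟨fun h => h.2.2, by rintro rfl; exact ⟨nil_sublist _, nil_sublist _, rfl⟩⟩
  rw [commonCount, this, Set.ncard_singleton]

theorem commonCount_eq_zero_of_length_lt {u : List α} (v : List α) {L : ℕ} (h : u.length < L) :
    commonCount u v L = 0 := by
  rw [commonCount, Set.ncard_eq_zero (commonSubseqs_finite u v L)]
  ext w
  simp only [commonSubseqs, Set.mem_empty_iff_false, iff_false]
  exact fun ⟨hu, _, hw⟩ => (hw ▸ hu.length_le).not_gt h

theorem commonCount_length_of_sublist {u v : List α} (h : u <+ v) :
    commonCount u v u.length = 1 := by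
  have : commonSubseqs u v u.length = {u} := by
    ext w
    exact ⟨fun ⟨hu, _, hw⟩ => hu.eq_of_length hw,
      by rintro rfl; exact ⟨Sublist.refl _, h, rfl⟩⟩
  rw [commonCount, this, Set.ncard_singleton]

theorem commonCount_map {β : Type*} {f : α → β} (hf : f.Injective) (u v : List α) (L : ℕ) :
    commonCount (u.map f) (v.map f) L = commonCount u v L := by
  have : commonSubseqs (u.map f) (v.map f) L = map f '' commonSubseqs u v L := by
    ext w
    simp only [commonSubseqs, Set.mem_image, sublist_map_iff]
    constructor
    · rintro ⟨⟨w₁, hw₁, rfl⟩, ⟨w₂, hw₂, he⟩, hl⟩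
      obtain rfl := map_injective_iff.mpr hf he
      exact ⟨w₁, ⟨hw₁, hw₂, by simpa using hl⟩, rfl⟩
    · rintro ⟨w, ⟨hu, hv, hl⟩, rfl⟩
      exact ⟨⟨w, hu, rfl⟩, ⟨w, hv, rfl⟩, by simpa using hl⟩
  rw [commonCount, this, Set.ncard_image_of_injective _ (map_injective_iff.mpr hf)]
  rfl

theorem commonCount_succ [Fintype α] [DecidableEq α] (u v : List α) (L : ℕ) :
    commonCount u v (L + 1) =
      ∑ x, if x ∈ u ∧ x ∈ v then commonCount (after x u) (after x v) L else 0 := by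
  have hsplit : commonSubseqs u v (L + 1) =
      ⋃ x, (x :: ·) '' {w | x :: w <+ u ∧ x :: w <+ v ∧ w.length = L} := by
    ext w
    cases w with
    | nil => simp [commonSubseqs]
    | cons x w => simp [commonSubseqs]
  have hfin : ∀ x : α, {w | x :: w <+ u ∧ x :: w <+ v ∧ w.length = L}.Finite := fun x =>
    (commonSubseqs_finite u v (L + 1)).preimage (cons_injective.injOn) |>.subset
      fun w hw => ⟨hw.1, hw.2.1, by simp [hw.2.2]⟩
  rw [commonCount, hsplit, Set.ncard_iUnion_of_finite (fun x => (hfin x).image _),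
    finsum_eq_sum_of_fintype]
  · refine Finset.sum_congr rfl fun x _ => ?_
    rw [Set.ncard_image_of_injective _ cons_injective]
    simp only [cons_sublist_iff_mem_and_sublist_after]
    split_ifs with hx
    · simp only [hx, true_and]; rfl
    · convert Set.ncard_empty (List α) using 2
      exact Set.eq_empty_of_forall_notMem fun w hw => hx ⟨hw.1.1, hw.2.1.1⟩
  · intro x y hxy
    refine Set.disjoint_left.mpr ?_
    rintro _ ⟨w, _, rfl⟩ ⟨w', _, h⟩
    exact hxy (cons_eq_cons.mp h).1.symm

end Subsequences

section LCS

variable {u v : List Bool} {L : ℕ}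

theorem LCSlen_eq_of_commonCount (h : commonCount u v L ≠ 0)
    (hgt : ∀ L', L < L' → commonCount u v L' = 0) : LCSlen u v = L := by
  refine IsGreatest.csSup_eq ⟨Set.nonempty_of_ncard_ne_zero h, ?_⟩
  rintro m ⟨w, hw⟩
  by_contra! hlt
  exact (Set.ncard_pos (commonSubseqs_finite u v m)).mpr ⟨w, hw⟩ |>.ne' (hgt m hlt)

theorem mLCS_eq_commonCount (h : commonCount u v L ≠ 0)
    (hgt : ∀ L', L < L' → commonCount u v L' = 0) : mLCS u v = commonCount u v L := by
  rw [mLCS, LCSlen_eq_of_commonCount h hgt]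
  rfl

theorem mLCS_eq_one_of_sublist_left (h : u <+ v) : mLCS u v = 1 := by
  rw [mLCS_eq_commonCount (L := u.length) (by simp [commonCount_length_of_sublist h])
    (fun _ hL => commonCount_eq_zero_of_length_lt v hL), commonCount_length_of_sublist h]

theorem mLCS_eq_one_of_sublist_right (h : v <+ u) : mLCS u v = 1 := by
  rw [mLCS_eq_commonCount (L := v.length)
    (by simp [commonCount_comm u, commonCount_length_of_sublist h])
    (fun _ hL => commonCount_comm u v _ ▸ commonCount_eq_zero_of_length_lt u hL),
    commonCount_comm, commonCount_length_of_sublist h]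

end LCS

section Factor

variable {α : Type*} (s : ℕ → α)

def factor : ℕ → ℕ → List α
  | _, 0 => []
  | p, n + 1 => s p :: factor (p + 1) n

@[simp]
theorem length_factor (p n : ℕ) : (factor s p n).length = n := by
  induction n generalizing p with
  | zero => rfl
  | succ n ih => simp [factor, ih]

theorem factor_add (p m n : ℕ) : factor s p (m + n) = factor s p m ++ factor s (p + m) n := by
  induction m generalizing p with
  | zero => simp [factor]
  | succ m ih =>
    rw [Nat.succ_add, factor, ih, factor, cons_append, Nat.add_right_comm, Nat.add_assoc]

theorem factor_sublist_factor {m n : ℕ} (h : m ≤ n) (p : ℕ) :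
    factor s p m <+ factor s p n := by
  obtain ⟨d, rfl⟩ := Nat.exists_eq_add_of_le h
  rw [factor_add]
  exact sublist_append_left _ _

theorem factor_add_eq_map {β : Type*} {t : ℕ → β} {f : α → β} {d : ℕ}
    (h : ∀ i, t (i + d) = f (s i)) (p n : ℕ) : factor t (p + d) n = (factor s p n).map f := by
  induction n generalizing p with
  | zero => rfl
  | succ n ih => rw [factor, factor, Nat.add_right_comm, ih, h, map_cons]

theorem factor_add_period {d : ℕ} (h : ∀ i, s (i + d) = s i) (p n : ℕ) :
    factor s (p + d) n = factor s p n := by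
  rw [factor_add_eq_map s (f := id) h, map_id]

variable [DecidableEq α]

/-- One more than the distance from `p` to the next `x` in `s`, provided `x` is among
`s p, s (p + 1), s (p + 2)`. -/
def step (x : α) (p : ℕ) : ℕ :=
  if s p = x then 1 else if s (p + 1) = x then 2 else 3

variable {s} {x : α} {p : ℕ}

theorem mem_factor_iff_step_le (hx : s p = x ∨ s (p + 1) = x ∨ s (p + 2) = x) (n : ℕ) :
    x ∈ factor s p n ↔ step s x p ≤ n := by
  rcases n with _ | _ | _ | n <;> by_cases h0 : s p = x <;> by_cases h1 : s (p + 1) = x <;>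
    simp_all [factor, step, eq_comm]

theorem after_factor (hx : s p = x ∨ s (p + 1) = x ∨ s (p + 2) = x) (n : ℕ) :
    after x (factor s p n) = factor s (p + step s x p) (n - step s x p) := by
  rcases n with _ | _ | _ | n <;> by_cases h0 : s p = x <;> by_cases h1 : s (p + 1) = x <;>
    simp_all [factor, step, after]

end Factor

theorem commonCount_factor_succ {α : Type*} [Fintype α] [DecidableEq α] {s t : ℕ → α}
    (hs : ∀ i x, s i = x ∨ s (i + 1) = x ∨ s (i + 2) = x)
    (ht : ∀ i x, t i = x ∨ t (i + 1) = x ∨ t (i + 2) = x) (q p a b L : ℕ) :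
    commonCount (factor s q a) (factor t p b) (L + 1) =
      ∑ x, if step s x q ≤ a ∧ step t x p ≤ b then
        commonCount (factor s (q + step s x q) (a - step s x q))
          (factor t (p + step t x p) (b - step t x p)) L
      else 0 := by
  rw [commonCount_succ]
  refine Finset.sum_congr rfl fun x _ => ?_
  simp only [mem_factor_iff_step_le (hs q x), mem_factor_iff_step_le (ht p x),
    after_factor (hs q x), after_factor (ht p x)]

section PeriodicWords

def p10 (i : ℕ) : Bool := decide (i % 2 = 0)

def p0110 (i : ℕ) : Bool := decide (i % 4 = 1 ∨ i % 4 = 2)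

theorem p10_add_one (i : ℕ) : p10 (i + 1) = !p10 i := by
  simp only [p10]; rcases Nat.mod_two_eq_zero_or_one i with h | h <;> simp [h, Nat.add_mod]

theorem p10_add_two (i : ℕ) : p10 (i + 2) = p10 i := by
  simp [p10]

theorem p0110_add_two (i : ℕ) : p0110 (i + 2) = !p0110 i := by
  simp only [p0110]
  rcases (by omega : i % 4 = 0 ∨ i % 4 = 1 ∨ i % 4 = 2 ∨ i % 4 = 3) with h | h | h | h <;>
    simp [h, Nat.add_mod]

theorem p10_covers (i : ℕ) (x : Bool) : p10 i = x ∨ p10 (i + 1) = x ∨ p10 (i + 2) = x := by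
  rw [p10_add_one]; cases x <;> cases p10 i <;> simp

theorem p0110_covers (i : ℕ) (x : Bool) :
    p0110 i = x ∨ p0110 (i + 1) = x ∨ p0110 (i + 2) = x := by
  rw [p0110_add_two]; cases x <;> cases p0110 i <;> simp

end PeriodicWords

noncomputable def periodicCount (q p a b L : ℕ) : ℕ :=
  commonCount (factor p10 q a) (factor p0110 p b) L

theorem periodicCount_succ (q p a b L : ℕ) :
    periodicCount q p a b (L + 1) =
      ∑ x, if step p10 x q ≤ a ∧ step p0110 x p ≤ b then
        periodicCount (q + step p10 x q) (p + step p0110 x p)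
          (a - step p10 x q) (b - step p0110 x p) L
      else 0 :=
  commonCount_factor_succ p10_covers p0110_covers q p a b L

theorem periodicCount_add_one_add_two (q p a b L : ℕ) :
    periodicCount (q + 1) (p + 2) a b L = periodicCount q p a b L := by
  rw [periodicCount, factor_add_eq_map p10 p10_add_one, factor_add_eq_map p0110 p0110_add_two,
    commonCount_map Bool.not_injective]
  rfl

theorem periodicCount_add_two (q p a b L : ℕ) :
    periodicCount (q + 2) p a b L = periodicCount q p a b L := by
  rw [periodicCount, factor_add_period p10 p10_add_two]
  rfl

/-- Reading a common letter from phases `(q, p)` lowers `2 * a + b + defect q p` by at least 4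
(`defect_step`). -/
def defect (q p : ℕ) : ℕ := [0, 1, 2, 0].getD ((p + 2 * q) % 4) 0

theorem defect_step (x : Bool) (q p : ℕ) :
    defect (q + step p10 x q) (p + step p0110 x p) + 4 ≤
      2 * step p10 x q + step p0110 x p + defect q p := by
  have hq2 : q % 2 = q % 4 % 2 := (Nat.mod_mod_of_dvd q (by norm_num)).symm
  rcases (by omega : q % 4 = 0 ∨ q % 4 = 1 ∨ q % 4 = 2 ∨ q % 4 = 3) with hq | hq | hq | hq <;>
  rcases (by omega : p % 4 = 0 ∨ p % 4 = 1 ∨ p % 4 = 2 ∨ p % 4 = 3) with hp | hp | hp | hp <;>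
  cases x <;> simp [step, p10, p0110, defect, Nat.add_mod, Nat.mul_mod, hq, hp, hq2]

theorem periodicCount_eq_zero {q p a b L : ℕ} (h : 2 * a + b + defect q p < 4 * L) :
    periodicCount q p a b L = 0 := by
  induction L generalizing q p a b with
  | zero => omega
  | succ L ih =>
    rw [periodicCount_succ]
    refine Finset.sum_eq_zero fun x _ => ite_eq_right_iff.mpr fun hx => ih ?_
    have := defect_step x q p
    omega

theorem periodicCount_zero_zero_succ (a b L : ℕ) :
    periodicCount 0 0 a b (L + 1) =
      (if 1 ≤ a ∧ 2 ≤ b then periodicCount 0 0 (a - 1) (b - 2) L else 0) +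
      (if 2 ≤ a ∧ 1 ≤ b then periodicCount 2 1 (a - 2) (b - 1) L else 0) := by
  rw [periodicCount_succ, Fintype.sum_bool, ← periodicCount_add_one_add_two 0 0]
  rfl

theorem periodicCount_two_one_succ (a b L : ℕ) :
    periodicCount 2 1 a b (L + 1) =
      (if 1 ≤ a ∧ 1 ≤ b then periodicCount 0 0 (a - 1) (b - 1) L else 0) +
      (if 2 ≤ a ∧ 3 ≤ b then periodicCount 4 4 (a - 2) (b - 3) L else 0) := by
  rw [periodicCount_succ, Fintype.sum_bool, ← periodicCount_add_two 0 0,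
    ← periodicCount_add_one_add_two (0 + 2) 0]
  rfl

theorem periodicCount_recurrence {a b L : ℕ} (ha : 3 ≤ a) (hb : 2 ≤ b)
    (hL : 2 * a + b < 4 * L + 12) :
    periodicCount 0 0 a b (L + 2) =
      periodicCount 0 0 (a - 1) (b - 2) (L + 1) + periodicCount 0 0 (a - 3) (b - 2) L := by
  rw [periodicCount_zero_zero_succ, periodicCount_two_one_succ, if_pos ⟨by omega, hb⟩,
    if_pos ⟨by omega, by omega⟩, if_pos ⟨by omega, by omega⟩]
  have hvanish : (if 2 ≤ a - 2 ∧ 3 ≤ b - 1 then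
      periodicCount 4 4 (a - 2 - 2) (b - 1 - 3) L else 0) = 0 :=
    ite_eq_right_iff.mpr fun _ =>
      periodicCount_eq_zero (by rw [show defect 4 4 = 0 from rfl]; omega)
  rw [hvanish, add_zero, show a - 2 - 1 = a - 3 by omega, show b - 1 - 1 = b - 2 by omega]

theorem factor_p10_sublist_factor_p0110 {a k : ℕ} (h : a ≤ k) :
    factor p10 0 a <+ factor p0110 0 (2 * k) := by
  refine (factor_sublist_factor p10 h 0).trans ?_
  clear h
  induction k with
  | zero => exact nil_sublist _
  | succ k ih =>
    rw [Nat.add_comm k 1, factor_add, factor_add_eq_map p10 p10_add_one,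
      show 2 * (1 + k) = 2 + 2 * k by ring, factor_add,
      factor_add_eq_map p0110 p0110_add_two]
    exact Sublist.append (by decide) (ih.map not)

theorem factor_p0110_sublist_factor_p10 {a k : ℕ} (h : 3 * k ≤ a) :
    factor p0110 0 (2 * k) <+ factor p10 0 a := by
  refine Sublist.trans ?_ (factor_sublist_factor p10 h 0)
  clear h
  induction k with
  | zero => exact nil_sublist _
  | succ k ih =>
    rw [show 2 * (k + 1) = 2 + 2 * k by ring, factor_add, factor_add_eq_map p0110 p0110_add_two,
      show 3 * (k + 1) = 3 + 3 * k by ring, factor_add,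
      factor_add_eq_map p10 fun i => (p10_add_two (i + 1)).trans (p10_add_one i)]
    exact Sublist.append (by decide) (ih.map not)

theorem periodicCount_pos {k a : ℕ} (h₁ : k ≤ a + 1) (h₂ : a ≤ 3 * k + 1) :
    0 < periodicCount 0 0 a (2 * k) ((a + k) / 2) := by
  induction k generalizing a with
  | zero => rw [show (a + 0) / 2 = 0 by omega, periodicCount, commonCount_zero]; exact one_pos
  | succ k ih =>
    rcases Nat.lt_or_ge a (3 * (k + 1)) with ha | ha
    · rcases Nat.eq_zero_or_pos a with rfl | ha₀
      · rw [show (0 + (k + 1)) / 2 = 0 by omega, periodicCount, commonCount_zero]; exact one_pos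
      · rw [show (a + (k + 1)) / 2 = (a - 1 + k) / 2 + 1 by omega, periodicCount_zero_zero_succ,
          if_pos ⟨ha₀, by omega⟩, show 2 * (k + 1) - 2 = 2 * k by omega]
        exact Nat.add_pos_left (ih (by omega) (by omega)) _
    · rw [show (a + (k + 1)) / 2 = (factor p0110 0 (2 * (k + 1))).length by simp; omega,
        periodicCount, commonCount_comm,
        commonCount_length_of_sublist (factor_p0110_sublist_factor_p10 ha)]
      exact one_pos

theorem mLCS_factor_eq_periodicCount {k a : ℕ} (h₁ : k ≤ a + 1) (h₂ : a ≤ 3 * k + 1) :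
    mLCS (factor p10 0 a) (factor p0110 0 (2 * k)) = periodicCount 0 0 a (2 * k) ((a + k) / 2) :=
  mLCS_eq_commonCount (periodicCount_pos h₁ h₂).ne'
    fun _ hL => periodicCount_eq_zero (by rw [show defect 0 0 = 0 from rfl]; omega)

theorem mLCS_factor_recurrence {k a : ℕ} (ha : 3 ≤ a) (h₁ : k < a) (h₂ : a < 3 * k) :
    mLCS (factor p10 0 a) (factor p0110 0 (2 * k)) =
      mLCS (factor p10 0 (a - 1)) (factor p0110 0 (2 * (k - 1))) +
        mLCS (factor p10 0 (a - 3)) (factor p0110 0 (2 * (k - 1))) := by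
  rw [mLCS_factor_eq_periodicCount (by omega) (by omega),
    mLCS_factor_eq_periodicCount (by omega) (by omega),
    mLCS_factor_eq_periodicCount (by omega) (by omega), show 2 * (k - 1) = 2 * k - 2 by omega,
    show (a + k) / 2 = (a - 3 + (k - 1)) / 2 + 2 by omega,
    show (a - 1 + (k - 1)) / 2 = (a - 3 + (k - 1)) / 2 + 1 by omega]
  exact periodicCount_recurrence (by omega) (by omega) (by omega)

theorem mLCS_factor_of_le {k a : ℕ} (h : a ≤ k) :
    mLCS (factor p10 0 a) (factor p0110 0 (2 * k)) = 1 :=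
  mLCS_eq_one_of_sublist_left (factor_p10_sublist_factor_p0110 h)

theorem mLCS_factor_of_ge {k a : ℕ} (h : 3 * k ≤ a) :
    mLCS (factor p10 0 a) (factor p0110 0 (2 * k)) = 1 :=
  mLCS_eq_one_of_sublist_right (factor_p0110_sublist_factor_p10 h)

theorem repPrefix_eq_factor {x : List Bool} {s : ℕ → Bool} (hx : x ≠ [])
    (hs : ∀ i, s (i + x.length) = s i) (hfactor : factor s 0 x.length = x) (m : ℕ) :
    repPrefix x m = factor s 0 m := by
  have hflatten : ∀ j, (replicate j x).flatten = factor s 0 (j * x.length) := by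
    intro j
    induction j with
    | zero => simp [factor]
    | succ j ih =>
      rw [replicate_succ, flatten_cons, ih, Nat.succ_mul, Nat.add_comm, factor_add,
        factor_add_period s hs, hfactor]
  have hm : m ≤ m * x.length := Nat.le_mul_of_pos_right m (length_pos_iff.mpr hx)
  rw [repPrefix, hflatten, ← Nat.add_sub_cancel' hm, factor_add,
    take_left' (length_factor s 0 m)]

end LCSPeriodic

open LCSPeriodic in
theorem stmt18_general (a b : ℕ) (ha : 3 ≤ a) (hbe : Even b) :
    (a ≤ b / 2 →
      mLCS (repPrefix [true, false] a) (repPrefix [false, true, true, false] b)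
        = mLCS (repPrefix [true, false] (a - 1))
            (repPrefix [false, true, true, false] (b - 2))) ∧
    (b / 2 < a → a < 3 * b / 2 →
      mLCS (repPrefix [true, false] a) (repPrefix [false, true, true, false] b)
        = mLCS (repPrefix [true, false] (a - 1))
            (repPrefix [false, true, true, false] (b - 2))
          + mLCS (repPrefix [true, false] (a - 3))
              (repPrefix [false, true, true, false] (b - 2))) ∧
    (3 * b / 2 ≤ a →
      mLCS (repPrefix [true, false] a) (repPrefix [false, true, true, false] b)
        = mLCS (repPrefix [true, false] (a - 3))
            (repPrefix [false, true, true, false] (b - 2))) := by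
  obtain ⟨k, rfl⟩ := hbe
  have hu : ∀ n, repPrefix [true, false] n = factor p10 0 n :=
    repPrefix_eq_factor (by simp) p10_add_two rfl
  have hv : ∀ n, repPrefix [false, true, true, false] n = factor p0110 0 n :=
    repPrefix_eq_factor (by simp) (fun i => by simp [p0110_add_two]) rfl
  rw [← two_mul]
  simp only [hu, hv, show 2 * k - 2 = 2 * (k - 1) by omega, show 2 * k / 2 = k by omega,
    show 3 * (2 * k) / 2 = 3 * k by omega]
  refine ⟨fun h => ?_, fun h₁ h₂ => mLCS_factor_recurrence ha h₁ h₂, fun h => ?_⟩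
  · rw [mLCS_factor_of_le h, mLCS_factor_of_le (by omega)]
  · rw [mLCS_factor_of_ge h, mLCS_factor_of_ge (by omega)]

theorem stmt18 (a b : ℕ) (ha : 3 ≤ a) (hb : 2 ≤ b) (hbe : Even b) :
    (a ≤ b / 2 →
      mLCS (repPrefix [true, false] a) (repPrefix [false, true, true, false] b)
        = mLCS (repPrefix [true, false] (a - 1))
            (repPrefix [false, true, true, false] (b - 2))) ∧
    (b / 2 < a → a < 3 * b / 2 →
      mLCS (repPrefix [true, false] a) (repPrefix [false, true, true, false] b)
        = mLCS (repPrefix [true, false] (a - 1))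
            (repPrefix [false, true, true, false] (b - 2))
          + mLCS (repPrefix [true, false] (a - 3))
              (repPrefix [false, true, true, false] (b - 2))) ∧
    (3 * b / 2 ≤ a →
      mLCS (repPrefix [true, false] a) (repPrefix [false, true, true, false] b)
        = mLCS (repPrefix [true, false] (a - 3))
            (repPrefix [false, true, true, false] (b - 2))) :=
  stmt18_general a b ha hbe
end
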